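/- arXiv:2305.06261 — 8 statements merged into one kernel-verified Lean document; each statement's English description precedes it below -/
import Mathlib

section
/- Let a : ℤ → ℂ satisfy ∑_{k∈ℤ}|a_k| < ∞ and define f : ℝ → ℂ by f(t) = ∑_{k∈ℤ} a_k e^{2πikt}. If f(t) ≠ 0 for every t ∈ ℝ, then there exists b : ℤ → ℂ with ∑_{k∈ℤ}|b_k| < ∞ such that 1/f(t) = ∑_{k∈ℤ} b_k e^{2πikt} for every t ∈ ℝ. -/
set_option maxHeartbeats 1000000

noncomputable section
namespace WienerProof

open scoped ENNReal

instance factOne : Fact ((1:ℝ≥0∞) ≤ 1) := ⟨le_rfl⟩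

abbrev W : Type := lp (fun _ : ℤ => ℂ) 1

lemma memW_iff {f : ℤ → ℂ} : Memℓp f 1 ↔ Summable fun k => ‖f k‖ := by
  rw [memℓp_gen_iff (by norm_num)]
  simp

lemma summable_norm (f : W) : Summable fun k => ‖f k‖ :=
  memW_iff.1 (lp.memℓp f)

lemma norm_eq (f : W) : ‖f‖ = ∑' k, ‖f k‖ := by
  have := lp.hasSum_norm (p := 1) (by norm_num) f
  simp only [ENNReal.toReal_one, Real.rpow_one] at this
  exact this.tsum_eq.symm

/-- `(k, j) ↦ (j, k - j)`. -/
def shear2 : ℤ × ℤ ≃ ℤ × ℤ where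
  toFun p := (p.2, p.1 - p.2)
  invFun q := (q.1 + q.2, q.1)
  left_inv p := by simp
  right_inv q := by simp

/-- The shear equivalence `(j, m) ↦ (j, m + j)`. -/
def shear : ℤ × ℤ ≃ ℤ × ℤ where
  toFun p := (p.1, p.2 + p.1)
  invFun p := (p.1, p.2 - p.1)
  left_inv p := by simp
  right_inv p := by simp

section conv

variable (x y : ℤ → ℂ)

/-- Convolution. -/
def conv : ℤ → ℂ := fun k => ∑' j, x j * y (k - j)

variable {x y}
variable (hx : Summable fun k => ‖x k‖) (hy : Summable fun k => ‖y k‖)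

include hx hy

lemma summable_prod_norm : Summable fun p : ℤ × ℤ => ‖x p.1 * y (p.2 - p.1)‖ := by
  have h := hx.mul_of_nonneg hy (fun k => norm_nonneg _) (fun k => norm_nonneg _)
  have h2 := (Equiv.summable_iff (f := fun p : ℤ × ℤ => ‖x p.1‖ * ‖y p.2‖) shear.symm).2 h
  simpa [Function.comp_def, shear, norm_mul] using h2

lemma summable_prod : Summable fun p : ℤ × ℤ => x p.1 * y (p.2 - p.1) :=
  (summable_prod_norm hx hy).of_norm

lemma summable_slice (k : ℤ) : Summable fun j => x j * y (k - j) := by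
  have := ((summable_prod hx hy).prod_symm).prod_factor k
  simpa using this

lemma summable_prod_norm_swap :
    Summable fun p : ℤ × ℤ => ‖x p.2 * y (p.1 - p.2)‖ := by
  have := (summable_prod_norm hx hy).prod_symm
  simpa using this

lemma summable_conv_norm : Summable fun k => ‖conv x y k‖ := by
  have H := summable_prod_norm_swap hx hy
  have H2 := (summable_prod_of_nonneg (f := fun p : ℤ × ℤ => ‖x p.2 * y (p.1 - p.2)‖)
    (fun p => norm_nonneg _)).1 H
  refine H2.2.of_nonneg_of_le (fun k => norm_nonneg _) (fun k => ?_)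
  exact norm_tsum_le_tsum_norm ((summable_slice hx hy k).norm)

lemma tsum_conv_norm_le :
    ∑' k, ‖conv x y k‖ ≤ (∑' k, ‖x k‖) * ∑' k, ‖y k‖ := by
  have H := summable_prod_norm_swap hx hy
  have h1 : ∑' k, ‖conv x y k‖ ≤ ∑' k, ∑' j, ‖x j * y (k - j)‖ := by
    refine Summable.tsum_le_tsum (fun k => norm_tsum_le_tsum_norm ((summable_slice hx hy k).norm))
      (summable_conv_norm hx hy) ?_
    exact ((summable_prod_of_nonneg (fun p => norm_nonneg _)).1 H).2
  have h2 : ∑' k, ∑' j, ‖x j * y (k - j)‖ = ∑' p : ℤ × ℤ, ‖x p.2 * y (p.1 - p.2)‖ :=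
    (Summable.tsum_prod' H (fun k => by simpa using ((summable_prod_norm hx hy).prod_symm.prod_factor k))).symm
  have h3 : ∑' p : ℤ × ℤ, ‖x p.2 * y (p.1 - p.2)‖ = (∑' k, ‖x k‖) * ∑' k, ‖y k‖ := by
    rw [Summable.tsum_mul_tsum hx hy (hx.mul_of_nonneg hy (fun k => norm_nonneg _) (fun k => norm_nonneg _))]
    rw [← Equiv.tsum_eq shear2 (fun p : ℤ × ℤ => ‖x p.1‖ * ‖y p.2‖)]
    simp [shear2, norm_mul]
  rw [h2, h3] at h1; exact h1

lemma memW_conv : Memℓp (conv x y) 1 := memW_iff.2 (summable_conv_norm hx hy)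

end conv

instance : Mul W := ⟨fun x y => ⟨conv x y, memW_conv (summable_norm x) (summable_norm y)⟩⟩

lemma mul_apply (x y : W) (k : ℤ) : (x * y) k = ∑' j, x j * y (k - j) := rfl

instance : One W := ⟨lp.single 1 (0:ℤ) (1:ℂ)⟩

lemma one_apply (k : ℤ) : (1 : W) k = if k = 0 then 1 else 0 := by
  by_cases h : k = 0
  · subst h; rw [if_pos rfl]; exact lp.single_apply_self (E := fun _ : ℤ => ℂ) 1 (0:ℤ) (1:ℂ)
  · simp only [h, if_false]
    exact lp.single_apply_ne (E := fun _ : ℤ => ℂ) 1 (0:ℤ) (1:ℂ) h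

lemma conv_comm (x y : W) (k : ℤ) : (x * y) k = (y * x) k := by
  rw [mul_apply, mul_apply]
  rw [← Equiv.tsum_eq (Equiv.subLeft k) (fun j => x j * y (k - j))]
  simp [Equiv.subLeft, mul_comm]

lemma one_mul' (x : W) : (1 : W) * x = x := by
  ext k
  rw [mul_apply]
  rw [tsum_eq_single (0:ℤ) (fun j hj => by simp [one_apply, hj])]
  simp [one_apply]


lemma mul_one' (x : W) : x * (1 : W) = x := by
  ext k; rw [conv_comm, one_mul' x]

lemma zero_mul' (x : W) : (0 : W) * x = 0 := by
  ext k
  rw [mul_apply]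
  simp

lemma mul_zero' (x : W) : x * (0 : W) = 0 := by
  ext k; rw [conv_comm]; rw [zero_mul']

lemma left_distrib' (x y z : W) : x * (y + z) = x * y + x * z := by
  ext k
  rw [lp.coeFn_add, Pi.add_apply, mul_apply, mul_apply, mul_apply]
  rw [← Summable.tsum_add (summable_slice (summable_norm x) (summable_norm y) k)
      (summable_slice (summable_norm x) (summable_norm z) k)]
  refine tsum_congr fun j => ?_
  rw [lp.coeFn_add, Pi.add_apply]
  ring

lemma right_distrib' (x y z : W) : (x + y) * z = x * z + y * z := by
  ext k
  have h := left_distrib' z x y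
  calc ((x + y) * z) k = (z * (x + y)) k := conv_comm _ _ k
    _ = (z * x + z * y) k := by rw [h]
    _ = (z * x) k + (z * y) k := by rw [lp.coeFn_add, Pi.add_apply]
    _ = (x * z) k + (y * z) k := by rw [conv_comm z x, conv_comm z y]
    _ = (x * z + y * z) k := by rw [lp.coeFn_add, Pi.add_apply]

lemma mul_assoc' (x y z : W) : x * y * z = x * (y * z) := by
  ext k
  have hx := summable_norm x; have hy := summable_norm y; have hz := summable_norm z
  set C := ∑' m, ‖z m‖ with hC
  have hzC : ∀ m, ‖z m‖ ≤ C := fun m => Summable.le_tsum hz m (fun _ _ => norm_nonneg _)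
  set F : ℤ × ℤ → ℂ := fun p => x p.2 * y (p.1 - p.2) * z (k - p.1) with hF_def
  have hF : Summable F := by
    refine Summable.of_norm_bounded (g := fun p : ℤ × ℤ => ‖x p.2 * y (p.1 - p.2)‖ * C)
      ((summable_prod_norm_swap hx hy).mul_right C) (fun p => ?_)
    rw [hF_def, norm_mul]
    exact mul_le_mul_of_nonneg_left (hzC _) (norm_nonneg _)
  set G : ℤ × ℤ → ℂ := fun q => x q.1 * (y q.2 * z (k - q.1 - q.2)) with hG_def
  have hG : Summable G := by
    refine Summable.of_norm_bounded (g := fun q : ℤ × ℤ => ‖x q.1‖ * ‖y q.2‖ * C)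
      (((hx.mul_of_nonneg hy (fun _ => norm_nonneg _) (fun _ => norm_nonneg _)).mul_right C))
      (fun q => ?_)
    rw [hG_def]; simp only [norm_mul, ← mul_assoc]
    exact mul_le_mul_of_nonneg_left (hzC _) (by positivity)
  have hL : ((x * y) * z) k = ∑' p : ℤ × ℤ, F p := by
    rw [mul_apply]
    rw [Summable.tsum_prod' hF (fun j => hF.prod_factor j)]
    refine tsum_congr fun j => ?_
    rw [mul_apply, ← tsum_mul_right]
  have hR : (x * (y * z)) k = ∑' q : ℤ × ℤ, G q := by
    rw [mul_apply]
    rw [Summable.tsum_prod' hG (fun i => hG.prod_factor i)]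
    refine tsum_congr fun i => ?_
    rw [mul_apply, ← tsum_mul_left]
  rw [hL, hR, ← Equiv.tsum_eq shear2.symm F]
  refine tsum_congr fun q => ?_
  simp only [hF_def, hG_def, shear2, Equiv.coe_fn_symm_mk]
  rw [add_sub_cancel_left, sub_sub, mul_assoc]

lemma mul_comm' (x y : W) : x * y = y * x := by
  ext k; exact conv_comm x y k

instance : CommRing W :=
  { (inferInstance : AddCommGroup W) with
    mul := (· * ·)
    one := (1 : W)
    left_distrib := left_distrib'
    right_distrib := right_distrib'
    zero_mul := zero_mul'
    mul_zero := mul_zero'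
    mul_assoc := mul_assoc'
    one_mul := one_mul'
    mul_one := mul_one'
    mul_comm := mul_comm' }


instance : NormedCommRing W :=
  { (inferInstance : NormedAddCommGroup W), (inferInstance : CommRing W) with
    norm_mul_le := fun x y => by
      rw [norm_eq, norm_eq x, norm_eq y]
      exact tsum_conv_norm_le (summable_norm x) (summable_norm y) }

instance : NormOneClass W where
  norm_one := by
    have h := lp.norm_single (E := fun _ : ℤ => ℂ) (p := 1)
      (by norm_num : (0:ℝ≥0∞) < 1) (0:ℤ) (1:ℂ)
    rw [norm_one] at h; exact h

lemma smul_mul (c : ℂ) (x y : W) : (c • x) * y = c • (x * y) := by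
  ext k
  rw [lp.coeFn_smul, Pi.smul_apply, smul_eq_mul, mul_apply, mul_apply, ← tsum_mul_left]
  refine tsum_congr fun j => ?_
  rw [lp.coeFn_smul, Pi.smul_apply, smul_eq_mul]
  ring

lemma mul_smul' (c : ℂ) (x y : W) : x * (c • y) = c • (x * y) := by
  rw [mul_comm' x (c • y), smul_mul, mul_comm' y x]

instance : Algebra ℂ W := Algebra.ofModule smul_mul mul_smul'

instance : NormedAlgebra ℂ W := { (inferInstance : Algebra ℂ W) with
  norm_smul_le := fun c x => (norm_smul c x).le }

/-- The delta functions. -/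
def d (m : ℤ) : W := lp.single (E := fun _ : ℤ => ℂ) 1 m (1:ℂ)

lemma d_apply (m k : ℤ) : d m k = if k = m then 1 else 0 := by
  by_cases h : k = m
  · subst h; rw [if_pos rfl]; exact lp.single_apply_self (E := fun _ : ℤ => ℂ) 1 k (1:ℂ)
  · simp only [h, if_false]
    exact lp.single_apply_ne (E := fun _ : ℤ => ℂ) 1 m (1:ℂ) h

lemma d_zero : d 0 = 1 := by
  ext k; rw [d_apply, one_apply]

lemma d_mul (m n : ℤ) : d m * d n = d (m + n) := by
  ext k
  rw [mul_apply]
  rw [tsum_eq_single m (fun j hj => by rw [d_apply, if_neg hj, zero_mul])]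
  rw [d_apply, if_pos rfl, one_mul, d_apply, d_apply]
  by_cases h : k = m + n
  · rw [if_pos h, if_pos (by omega)]
  · rw [if_neg h, if_neg (by omega)]

lemma norm_d (m : ℤ) : ‖d m‖ = 1 := by
  simpa only [d, norm_one] using lp.norm_single (E := fun _ : ℤ => ℂ) (p := 1) (by norm_num)
    m (1:ℂ)

lemma single_eq_smul_d (k : ℤ) (c : ℂ) :
    lp.single (E := fun _ : ℤ => ℂ) 1 k c = c • d k := by
  rw [d, ← lp.single_smul, smul_eq_mul, mul_one]

open WeakDual in
lemma char_norm_le (χ : characterSpace ℂ W) (x : W) : ‖χ x‖ ≤ ‖x‖ :=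
  spectrum.norm_le_norm_of_mem (AlgHom.apply_mem_spectrum χ x)

open WeakDual in
lemma char_d_pow (χ : characterSpace ℂ W) (n : ℕ) : χ (d n) = χ (d 1) ^ n := by
  induction n with
  | zero => simp only [Nat.cast_zero, d_zero, pow_zero]; exact map_one χ
  | succ n ih =>
      have : d ((n : ℤ) + 1) = d n * d 1 := (d_mul n 1).symm
      rw [show ((n+1 : ℕ) : ℤ) = (n : ℤ) + 1 by push_cast; ring, this, map_mul, ih, pow_succ]

open WeakDual in
lemma char_d_inv (χ : characterSpace ℂ W) (m : ℤ) : χ (d m) * χ (d (-m)) = 1 := by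
  rw [← map_mul, d_mul, add_neg_cancel, d_zero, map_one]

open WeakDual in
lemma char_d_zpow (χ : characterSpace ℂ W) (m : ℤ) : χ (d m) = χ (d 1) ^ m := by
  obtain ⟨n, rfl | rfl⟩ := m.eq_nat_or_neg
  · rw [zpow_natCast, char_d_pow χ n]
  · have hinv := char_d_inv χ (n : ℤ)
    rw [char_d_pow χ n] at hinv
    rw [zpow_neg, zpow_natCast, inv_eq_of_mul_eq_one_right hinv]

open WeakDual in
lemma char_abs_one (χ : characterSpace ℂ W) : ‖χ (d 1)‖ = 1 := by
  have h1 : ‖χ (d 1)‖ ≤ 1 := by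
    simpa [norm_d] using char_norm_le χ (d 1)
  have h2 : ‖χ (d (-1))‖ ≤ 1 := by
    simpa [norm_d] using char_norm_le χ (d (-1))
  have h3 : ‖χ (d 1)‖ * ‖χ (d (-1))‖ = 1 := by
    rw [← norm_mul, char_d_inv χ 1, norm_one]
  nlinarith [norm_nonneg (χ (d 1)),
    norm_nonneg (χ (d (-1)))]


/-- The exponentials. -/
def eps (t : ℝ) (k : ℤ) : ℂ :=
  Complex.exp (2 * (Real.pi : ℂ) * Complex.I * (k : ℂ) * (t : ℂ))

lemma abs_eps (t : ℝ) (k : ℤ) : ‖eps t k‖ = 1 := by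
  rw [eps]
  have h : 2 * (Real.pi : ℂ) * Complex.I * (k : ℂ) * (t : ℂ)
      = ((2 * Real.pi * k * t : ℝ) : ℂ) * Complex.I := by push_cast; ring
  rw [h, Complex.norm_exp]
  simp

lemma eps_add (t : ℝ) (j m : ℤ) : eps t (j + m) = eps t j * eps t m := by
  rw [eps, eps, eps, ← Complex.exp_add]
  congr 1
  push_cast
  ring

lemma eps_zero (t : ℝ) : eps t 0 = 1 := by simp [eps]

lemma summable_mul_eps (x : W) (t : ℝ) : Summable fun k => x k * eps t k := by
  refine Summable.of_norm ?_
  simpa [norm_mul, abs_eps] using summable_norm x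

/-- Evaluation of a Fourier series at `t`. -/
def Ev (t : ℝ) (x : W) : ℂ := ∑' k, x k * eps t k

lemma Ev_one (t : ℝ) : Ev t 1 = 1 := by
  rw [Ev, tsum_eq_single (0:ℤ) (fun j hj => by rw [one_apply, if_neg hj, zero_mul])]
  rw [one_apply, if_pos rfl, eps_zero, one_mul]

lemma Ev_mul (t : ℝ) (x y : W) : Ev t (x * y) = Ev t x * Ev t y := by
  have hx := summable_norm x
  have hy := summable_norm y
  set F : ℤ × ℤ → ℂ := fun p => x p.2 * y (p.1 - p.2) * eps t p.1 with hF_def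
  have hFn : Summable fun p => ‖F p‖ := by
    have h := summable_prod_norm_swap hx hy
    simpa [hF_def, norm_mul, abs_eps] using h
  have hF : Summable F := hFn.of_norm
  have hL : Ev t (x * y) = ∑' p : ℤ × ℤ, F p := by
    rw [Ev, Summable.tsum_prod' hF (fun k => hF.prod_factor k)]
    refine tsum_congr fun k => ?_
    rw [mul_apply, ← tsum_mul_right]
  have hR : Ev t x * Ev t y = ∑' q : ℤ × ℤ, (x q.1 * eps t q.1) * (y q.2 * eps t q.2) := by
    rw [Ev, Ev]
    refine Summable.tsum_mul_tsum (summable_mul_eps x t) (summable_mul_eps y t) (Summable.of_norm ?_)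
    have := hx.mul_of_nonneg hy (fun _ => norm_nonneg _) (fun _ => norm_nonneg _)
    simpa [norm_mul, abs_eps] using this
  rw [hL, hR, ← Equiv.tsum_eq shear2.symm F]
  refine tsum_congr fun q => ?_
  simp only [hF_def, shear2, Equiv.coe_fn_symm_mk, add_sub_cancel_left, eps_add]
  ring

open WeakDual in
lemma char_exists_t (χ : characterSpace ℂ W) : ∃ t : ℝ, ∀ x : W, χ x = Ev t x := by
  obtain ⟨θ, hθ⟩ := (Complex.norm_eq_one_iff _).1 (char_abs_one χ)
  refine ⟨θ / (2 * Real.pi), fun x => ?_⟩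
  have heps : ∀ k : ℤ, eps (θ / (2 * Real.pi)) k = χ (d 1) ^ k := by
    intro k
    rw [← hθ, ← Complex.exp_int_mul, eps]
    congr 1
    have hπ : (Real.pi : ℂ) ≠ 0 := by exact_mod_cast Real.pi_ne_zero
    push_cast
    field_simp
  have hsum : HasSum (fun k : ℤ => x k • d k) x := by
    have h := lp.hasSum_single (E := fun _ : ℤ => ℂ) (p := 1) ENNReal.one_ne_top x
    simpa [single_eq_smul_d] using h
  have h2 : HasSum (fun k : ℤ => χ (x k • d k)) (χ x) :=
    ContinuousLinearMap.hasSum (χ : WeakDual ℂ W) hsum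
  have h3 : (fun k : ℤ => χ (x k • d k))
      = fun k : ℤ => x k * eps (θ / (2 * Real.pi)) k := by
    funext k
    rw [Algebra.smul_def, map_mul, AlgHomClass.commutes, char_d_zpow, heps]
    simp
  rw [h3] at h2
  exact h2.tsum_eq.symm

end WienerProof

open WienerProof in
/-- **Wiener's Lemma.** If `f(t) = ∑_{k∈ℤ} a_k e^{2πikt}` with absolutely summable
coefficients does not vanish on `ℝ`, then `1/f` also has absolutely summable
Fourier coefficients. -/
theorem wiener_lemma (a : ℤ → ℂ) (ha : Summable fun k => ‖a k‖)
    (f : ℝ → ℂ)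
    (hf : ∀ t : ℝ, f t =
      ∑' k : ℤ, a k * Complex.exp (2 * (Real.pi : ℂ) * Complex.I * (k : ℂ) * (t : ℂ)))
    (hne : ∀ t : ℝ, f t ≠ 0) :
    ∃ b : ℤ → ℂ, (Summable fun k => ‖b k‖) ∧
      ∀ t : ℝ, (f t)⁻¹ =
        ∑' k : ℤ, b k * Complex.exp (2 * (Real.pi : ℂ) * Complex.I * (k : ℂ) * (t : ℂ)) := by
  have ha' : Summable fun k => ‖a k‖ := by simpa  using ha
  let aW : W := ⟨a, memW_iff.2 ha'⟩
  have hfa : ∀ t : ℝ, f t = Ev t aW := by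
    intro t
    rw [hf t]
    rfl
  have hunit : IsUnit aW := by
    by_contra h
    obtain ⟨χ, hχ⟩ := WeakDual.CharacterSpace.exists_apply_eq_zero h
    obtain ⟨t, ht⟩ := char_exists_t χ
    exact hne t (by rw [hfa t, ← ht aW, hχ])
  obtain ⟨u, hu⟩ := hunit
  refine ⟨fun k => (↑u⁻¹ : W) k, ?_, fun t => ?_⟩
  · simpa  using summable_norm (↑u⁻¹ : W)
  · have hmul : (↑u⁻¹ : W) * aW = 1 := by rw [← hu]; exact u.inv_mul
    have h1 : Ev t (↑u⁻¹ : W) * f t = 1 := by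
      rw [hfa t, ← Ev_mul, hmul, Ev_one]
    have h2 : Ev t (↑u⁻¹ : W) = (f t)⁻¹ := eq_inv_of_mul_eq_one_left h1
    rw [← h2]
    rfl
end
end

section
/- Let p ∈ ℂ[X] be a nonzero polynomial all of whose coefficients are real (i.e., conj(coeff of p at n) = coeff of p at n for all n), and let ξ > 0. Let Λ be the multiset of roots of p in ℂ counted with multiplicity, and define Q ∈ ℂ[X] by Q = ∏_{r∈Λ}(X − m(r)), where m(r) = (1+ξ)r if |r| = 1 and m(r) = r otherwise. Then every coefficient of Q is real. -/
/-! Complex conjugation fixes `p`, hence permutes its roots (with multiplicity), and it commutes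
with the displacement `r ↦ (1 + ξ) r` on `𝕋` since it preserves the unit circle and fixes the real
factor `1 + ξ`. So conjugating the factors of `Q` only permutes them, and `Q` is fixed by
conjugation. -/

open Polynomial ComplexConjugate

namespace Polynomial

theorem map_eq_self_iff_coeff {R : Type*} [Semiring R] {φ : R →+* R} {p : R[X]} :
    p.map φ = p ↔ ∀ n, φ (p.coeff n) = p.coeff n := by
  simp only [Polynomial.ext_iff, coeff_map]

theorem Splits.roots_map_eq_self {K : Type*} [Field K] {φ : K →+* K} {p : K[X]}
    (hsplit : p.Splits) (hp : p.map φ = p) : p.roots.map φ = p.roots := by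
  rw [← hsplit.roots_map_of_injective φ.injective, hp]

theorem map_prod_X_sub_C_eq_self {R : Type*} [CommRing R] {φ : R →+* R} {s : Multiset R}
    {f : R → R} (hs : s.map φ = s) (hf : ∀ r, φ (f r) = f (φ r)) :
    (s.map fun r => X - C (f r)).prod.map φ = (s.map fun r => X - C (f r)).prod := by
  rw [Polynomial.map_multiset_prod, Multiset.map_map]
  conv_rhs => rw [← hs, Multiset.map_map]
  congr 1
  refine Multiset.map_congr rfl fun r _ => ?_
  simp only [Function.comp_apply, Polynomial.map_sub, map_X, map_C, hf]

end Polynomial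

noncomputable def pseudoReverseRoot (ξ : ℝ) (r : ℂ) : ℂ :=
  if ‖r‖ = 1 then ((1 + ξ : ℝ) : ℂ) * r else r

theorem conj_pseudoReverseRoot (ξ : ℝ) (r : ℂ) :
    conj (pseudoReverseRoot ξ r) = pseudoReverseRoot ξ (conj r) := by
  unfold pseudoReverseRoot
  rw [Complex.norm_conj]
  split_ifs
  · rw [map_mul, Complex.conj_ofReal]
  · rfl

theorem pseudo_approximant_real_coeffs_general (p : Polynomial ℂ)
    (hreal : ∀ n : ℕ, (starRingEnd ℂ) (p.coeff n) = p.coeff n)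
    (ξ : ℝ) (Q : Polynomial ℂ)
    (hQ : Q = (p.roots.map (fun r => Polynomial.X - Polynomial.C
        (if ‖r‖ = 1 then ((1 + ξ : ℝ) : ℂ) * r else r))).prod) :
    ∀ n : ℕ, (starRingEnd ℂ) (Q.coeff n) = Q.coeff n := by
  have hroots : p.roots.map conj = p.roots :=
    (IsAlgClosed.splits p).roots_map_eq_self (map_eq_self_iff_coeff.mpr hreal)
  rw [← map_eq_self_iff_coeff, hQ]
  exact map_prod_X_sub_C_eq_self hroots (conj_pseudoReverseRoot ξ)

/-- If `p ∈ ℂ[X]` is nonzero with real coefficients and `ξ > 0`, then the polynomial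
`Q = ∏_{r ∈ roots p} (X - m r)`, where `m r = (1+ξ)r` if `|r| = 1` and `m r = r`
otherwise, also has real coefficients. -/
theorem pseudo_approximant_real_coeffs (p : Polynomial ℂ) (hp : p ≠ 0)
    (hreal : ∀ n : ℕ, (starRingEnd ℂ) (p.coeff n) = p.coeff n)
    (ξ : ℝ) (hξ : 0 < ξ) (Q : Polynomial ℂ)
    (hQ : Q = (p.roots.map (fun r => Polynomial.X - Polynomial.C
        (if ‖r‖ = 1 then ((1 + ξ : ℝ) : ℂ) * r else r))).prod) :
    ∀ n : ℕ, (starRingEnd ℂ) (Q.coeff n) = Q.coeff n :=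
  pseudo_approximant_real_coeffs_general p hreal ξ Q hQ
end

section
/- Let s ≥ 1 be a natural number and let a : ℤ → ℝ satisfy a_k = 0 for all |k| > s. Define f : ℝ → ℝ by f(t) = ∑_{|k|≤s} a_k e^{2πikt}, and assume f(t) > 0 for every t ∈ ℝ (in particular f is real-valued). Set κ = (sup_t f(t))/(inf_t f(t)), λ = ((√κ − 1)/(√κ + 1))^{1/s}, and C = (1/inf_t f(t)) · max{1, (1+√κ)²/(2κ)}. Let b_k = ∫₀¹ e^{−2πikt}/f(t) dt be the Fourier coefficients of 1/f. Then |b_k| ≤ C·λ^{|k|} for every k ∈ ℤ. -/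
/-!
If `P` is a real polynomial of degree `n`, then `P ∘ f` is `ns`-banded, so for `|k| > ns` the
`k`-th Fourier coefficient of `1/f` is that of `1/f - P ∘ f`, which is at most
`sup |1/x - P x|` over `[inf f, sup f]`. The affine substitution `x = c + d cos θ` turns `1/x` on
this interval into a multiple of the Poisson kernel `(1 - q²)/(1 + 2q cos θ + q²)` with
`q = (√κ - 1)/(√κ + 1)`, which has an explicit polynomial approximation in `cos θ` of degree `n`
and error `2 q^(n+1)/(1 - q²)`: it is the real part of a rational function of `z = e^{iθ}`, and
Chebyshev polynomials turn `Re Q(e^{iθ})` into a polynomial in `cos θ`. Taking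
`n = ⌈|k|/s⌉ - 1` gives the decay `q^(|k|/s)`.
-/

open Polynomial Complex Real Finset

namespace Polynomial

noncomputable def cosTransform (Q : ℝ[X]) : ℝ[X] :=
  ∑ j ∈ range (Q.natDegree + 1), C (Q.coeff j) * Chebyshev.T ℝ j

theorem natDegree_cosTransform_le (Q : ℝ[X]) : Q.cosTransform.natDegree ≤ Q.natDegree := by
  refine natDegree_sum_le_of_forall_le _ _ fun j hj => (natDegree_C_mul_le _ _).trans ?_
  rw [Chebyshev.natDegree_T]
  simpa [Nat.lt_succ_iff] using hj

theorem eval_cos_cosTransform (Q : ℝ[X]) (θ : ℝ) :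
    Q.cosTransform.eval (Real.cos θ) = (aeval (cexp (θ * I)) Q).re := by
  rw [cosTransform, eval_finsetSum, aeval_eq_sum_range, re_sum]
  refine sum_congr rfl fun j _ => ?_
  rw [eval_mul, eval_C, Chebyshev.T_real_cos, ← Complex.exp_nat_mul, Complex.smul_re,
    smul_eq_mul, ← mul_assoc, ← ofReal_natCast, ← ofReal_mul, exp_ofReal_mul_I_re]
  norm_cast

end Polynomial

theorem re_poissonKernel (q θ : ℝ) :
    ((1 - q * cexp (θ * I)) / (1 + q * cexp (θ * I))).re
      = (1 - q ^ 2) / (1 + 2 * q * Real.cos θ + q ^ 2) := by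
  rw [Complex.div_re, ← add_div, normSq_apply]
  simp only [sub_re, add_re, add_im, sub_im, one_re, one_im, mul_re, mul_im, ofReal_re, ofReal_im,
    exp_ofReal_mul_I_re, exp_ofReal_mul_I_im]
  congr 1
  · linear_combination (-q ^ 2) * Real.sin_sq_add_cos_sq θ
  · linear_combination (q ^ 2) * Real.sin_sq_add_cos_sq θ

theorem norm_one_add_mul_eq_norm_add {z : ℂ} (hz : ‖z‖ = 1) (q : ℝ) :
    ‖1 + q * z‖ = ‖z + q‖ := by
  have hzz : z * (starRingEnd ℂ) z = 1 := by
    rw [mul_conj, normSq_eq_norm_sq, hz]; simp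
  calc ‖1 + q * z‖ = ‖z * (starRingEnd ℂ (z + q))‖ := by
        rw [map_add, conj_ofReal, mul_add, hzz, mul_comm z]
    _ = ‖z + q‖ := by rw [norm_mul, hz, one_mul, RCLike.norm_conj]

theorem exists_poly_approx_poissonKernel {q : ℝ} (hq0 : 0 < q) (hq1 : q < 1) (n : ℕ) :
    ∃ R : ℝ[X], R.natDegree ≤ n ∧ ∀ θ : ℝ,
      |(1 - q ^ 2) / (1 + 2 * q * Real.cos θ + q ^ 2) - R.eval (Real.cos θ)|
        ≤ 2 * q ^ (n + 1) / (1 - q ^ 2) := by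
  have hq2 : 0 < 1 - q ^ 2 := by nlinarith
  -- `N` vanishes at `-q⁻¹`, so `N(z)/(1 + qz)` is the polynomial `q⁻¹ Q(z)`; on `|z| = 1` its real
  -- part differs from the Poisson kernel by `E · Re W` with `|W| = 1`.
  set E : ℝ := 2 * (-q) ^ (n + 1) / (1 - q ^ 2)
  set N : ℝ[X] := 1 - C q * X - C E * (X ^ n * (X + C q))
  have hroot : N.IsRoot (-q⁻¹) := by
    have hpow : (-q) ^ (n + 1) * (-q⁻¹) ^ n = -q := by
      rw [pow_succ, mul_right_comm, ← mul_pow, neg_mul_neg, mul_inv_cancel₀ hq0.ne', one_pow,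
        one_mul]
    have hE : E * (-q⁻¹) ^ n = -2 * q / (1 - q ^ 2) := by
      rw [div_mul_eq_mul_div, mul_assoc, hpow]; ring
    simp only [N, IsRoot, eval_sub, eval_one, eval_mul, eval_C, eval_X, eval_pow, eval_add]
    rw [← mul_assoc, hE]
    field_simp
    ring
  set Q := N /ₘ (X - C (-q⁻¹))
  have hNQ : (X - C (-q⁻¹)) * Q = N := mul_divByMonic_eq_iff_isRoot.2 hroot
  have hQ : Q.natDegree ≤ n := by
    have hN : N.natDegree ≤ n + 1 := by
      simp only [N]; compute_degree
    rw [natDegree_divByMonic _ (monic_X_sub_C _), natDegree_X_sub_C]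
    omega
  refine ⟨C q⁻¹ * Q.cosTransform,
    (natDegree_C_mul_le _ _).trans (Q.natDegree_cosTransform_le.trans hQ), fun θ => ?_⟩
  set z := cexp (θ * I)
  have hz : ‖z‖ = 1 := norm_exp_ofReal_mul_I θ
  have hw : 1 + q * z ≠ 0 := by
    intro h
    have : ‖q * z‖ = 1 := by rw [show q * z = -1 by linear_combination h]; simp
    rw [norm_mul, hz, mul_one, norm_real, Real.norm_eq_abs, abs_of_pos hq0] at this
    linarith
  set W := z ^ n * (z + q) / (1 + q * z)
  have hQz : (q⁻¹ : ℂ) * aeval z Q = (1 - q * z) / (1 + q * z) - E * W := by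
    have h := congrArg (aeval z) hNQ
    simp only [N, map_mul, map_sub, map_one, map_add, map_pow, aeval_X, aeval_C,
      coe_algebraMap] at h
    have hq : (q : ℂ) ≠ 0 := ofReal_ne_zero.2 hq0.ne'
    rw [mul_div_assoc', div_sub_div_same, eq_div_iff hw, ← h]
    push_cast
    field_simp
    ring
  have hW : |W.re| ≤ 1 := by
    refine (abs_re_le_norm W).trans_eq ?_
    rw [norm_div, norm_mul, norm_pow, hz, one_pow, one_mul, ← norm_one_add_mul_eq_norm_add hz,
      div_self (norm_ne_zero_iff.2 hw)]
  have hE : |E| = 2 * q ^ (n + 1) / (1 - q ^ 2) := by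
    rw [abs_div, abs_mul, abs_pow, abs_neg, abs_of_pos hq0, abs_of_pos hq2, abs_two]
  rw [eval_mul, eval_C, eval_cos_cosTransform, ← re_ofReal_mul, ofReal_inv, hQz, sub_re,
    re_poissonKernel, re_ofReal_mul, sub_sub_cancel, abs_mul, ← hE]
  exact mul_le_of_le_one_right (abs_nonneg E) hW

theorem exists_poly_approx_inv {m u : ℝ} (hm : 0 < m) (hu : 1 ≤ u) (n : ℕ) :
    ∃ P : ℝ[X], P.natDegree ≤ n ∧ ∀ x ∈ Set.Icc m (m * u ^ 2),
      |x⁻¹ - P.eval x| ≤ 1 / m * ((1 + u) ^ 2 / (2 * u ^ 2)) * ((u - 1) / (u + 1)) ^ (n + 1) := by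
  rcases hu.eq_or_lt with rfl | hu
  · refine ⟨C m⁻¹, by simp, fun x hx => ?_⟩
    obtain rfl : x = m := by simpa using hx
    simp
  set q := (u - 1) / (u + 1)
  have hq0 : 0 < q := div_pos (by linarith) (by linarith)
  have hq1 : q < 1 := (div_lt_one (by linarith)).2 (by linarith)
  obtain ⟨R, hR, hRapprox⟩ := exists_poly_approx_poissonKernel hq0 hq1 n
  set c := m * (u ^ 2 + 1) / 2
  set d := m * (u ^ 2 - 1) / 2
  have hu2 : 0 < u ^ 2 - 1 := by nlinarith
  have hd : 0 < d := by positivity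
  have hq2 : 1 - q ^ 2 = 4 * u / (u + 1) ^ 2 := by
    simp only [q]; field_simp; ring
  refine ⟨C (m * u)⁻¹ * R.comp (C d⁻¹ * (X - C c)), ?_, fun x hx => ?_⟩
  · refine (natDegree_C_mul_le _ _).trans ((natDegree_comp_le).trans ?_)
    have : (C d⁻¹ * (X - C c)).natDegree ≤ 1 := by compute_degree
    nlinarith
  obtain ⟨θ, hθ⟩ : ∃ θ, Real.cos θ = (x - c) / d := by
    have h1 : -1 ≤ (x - c) / d := by rw [le_div_iff₀ hd]; simp only [c, d]; linarith [hx.1]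
    have h2 : (x - c) / d ≤ 1 := by rw [div_le_iff₀ hd]; simp only [c, d]; linarith [hx.2]
    exact ⟨arccos ((x - c) / d), cos_arccos h1 h2⟩
  have hx0 : 0 < x := hm.trans_le hx.1
  have hinv : x⁻¹ = (m * u)⁻¹ * ((1 - q ^ 2) / (1 + 2 * q * Real.cos θ + q ^ 2)) := by
    have hden : 1 + 2 * q * ((x - c) / d) + q ^ 2 = 4 * x / (m * (u + 1) ^ 2) := by
      simp only [q, c, d]; field_simp; ring
    rw [hθ, hq2, hden]
    field_simp
  have hPx : (C (m * u)⁻¹ * R.comp (C d⁻¹ * (X - C c))).eval x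
      = (m * u)⁻¹ * R.eval (Real.cos θ) := by
    simp [hθ, div_eq_inv_mul]
  rw [hinv, hPx, ← mul_sub, abs_mul, abs_of_pos (by positivity)]
  calc (m * u)⁻¹ * |(1 - q ^ 2) / (1 + 2 * q * Real.cos θ + q ^ 2) - R.eval (Real.cos θ)|
      ≤ (m * u)⁻¹ * (2 * q ^ (n + 1) / (1 - q ^ 2)) := by gcongr; exact hRapprox θ
    _ = _ := by
      rw [hq2]
      field_simp
      ring

noncomputable def fourierCoeffUnit (g : ℝ → ℂ) (k : ℤ) : ℂ :=
  ∫ t in (0 : ℝ)..1, cexp (-(2 * π * I * k * t)) * g t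

noncomputable def trigSum (s : ℕ) (a : ℤ → ℂ) (t : ℝ) : ℂ :=
  ∑ l ∈ Icc (-(s : ℤ)) s, a l * cexp (2 * π * I * l * t)

section FourierCoeffUnit

variable {g h : ℝ → ℂ}

theorem continuous_exp_fourier (k : ℤ) : Continuous fun t : ℝ => cexp (-(2 * π * I * k * t)) := by
  fun_prop

theorem fourierCoeffUnit_sub (hg : Continuous g) (hh : Continuous h) (k : ℤ) :
    fourierCoeffUnit (g - h) k = fourierCoeffUnit g k - fourierCoeffUnit h k := by
  simp only [fourierCoeffUnit, Pi.sub_apply, mul_sub]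
  exact intervalIntegral.integral_sub (((continuous_exp_fourier k).mul hg).intervalIntegrable _ _)
    (((continuous_exp_fourier k).mul hh).intervalIntegrable _ _)

theorem fourierCoeffUnit_sum {ι : Type*} (s : Finset ι) {g : ι → ℝ → ℂ}
    (hg : ∀ i ∈ s, Continuous (g i)) (k : ℤ) :
    fourierCoeffUnit (fun t => ∑ i ∈ s, g i t) k = ∑ i ∈ s, fourierCoeffUnit (g i) k := by
  simp only [fourierCoeffUnit, mul_sum]
  exact intervalIntegral.integral_finsetSum fun i hi =>
    ((continuous_exp_fourier k).mul (hg i hi)).intervalIntegrable _ _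

theorem fourierCoeffUnit_const_mul (c : ℂ) (g : ℝ → ℂ) (k : ℤ) :
    fourierCoeffUnit (fun t => c * g t) k = c * fourierCoeffUnit g k := by
  simp only [fourierCoeffUnit, mul_left_comm _ c]
  exact intervalIntegral.integral_const_mul _ _

theorem fourierCoeffUnit_mul_exp (g : ℝ → ℂ) (k l : ℤ) :
    fourierCoeffUnit (fun t => g t * cexp (2 * π * I * l * t)) k = fourierCoeffUnit g (k - l) := by
  simp only [fourierCoeffUnit]
  congr 1 with t
  rw [mul_left_comm, ← Complex.exp_add, mul_comm]
  push_cast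
  ring_nf

theorem fourierCoeffUnit_one {k : ℤ} (hk : k ≠ 0) : fourierCoeffUnit (fun _ => 1) k = 0 := by
  have hc : -(2 * π * I * k) ≠ 0 := by simp [hk, Real.pi_ne_zero, I_ne_zero]
  have hlin : (fun t : ℝ => cexp (-(2 * π * I * k * t)) * 1)
      = fun t : ℝ => cexp (-(2 * π * I * k) * t) := by
    ext t; ring_nf
  rw [fourierCoeffUnit, hlin, integral_exp_mul_complex hc, ofReal_one, mul_one, ofReal_zero,
    mul_zero, Complex.exp_zero,
    show -(2 * π * I * k) = (-k : ℤ) * (2 * π * I) by push_cast; ring,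
    Complex.exp_int_mul_two_pi_mul_I, sub_self, zero_div]

theorem norm_fourierCoeffUnit_le {B : ℝ} (hB : ∀ t, ‖g t‖ ≤ B) (k : ℤ) :
    ‖fourierCoeffUnit g k‖ ≤ B := by
  refine (intervalIntegral.norm_integral_le_of_norm_le_const (C := B) fun t _ => ?_).trans_eq
    (by simp)
  rw [norm_mul, norm_exp]
  simpa using hB t

end FourierCoeffUnit

section TrigSum

variable (s : ℕ) (a : ℤ → ℂ)

@[fun_prop]
theorem continuous_trigSum : Continuous (trigSum s a) := by
  unfold trigSum; fun_prop

theorem periodic_trigSum : Function.Periodic (trigSum s a) 1 := fun t => by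
  refine sum_congr rfl fun l _ => ?_
  rw [ofReal_add, ofReal_one, mul_add, mul_one, Complex.exp_add,
    show 2 * π * I * l = l * (2 * π * I) by ring, Complex.exp_int_mul_two_pi_mul_I, mul_one]

variable {s a}

theorem fourierCoeffUnit_mul_trigSum_eq_zero {g : ℝ → ℂ} (hg : Continuous g) {r : ℕ}
    (hgr : ∀ k : ℤ, r < k.natAbs → fourierCoeffUnit g k = 0) {k : ℤ} (hk : r + s < k.natAbs) :
    fourierCoeffUnit (fun t => g t * trigSum s a t) k = 0 := by
  simp only [trigSum, mul_sum, mul_left_comm (g _)]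
  rw [fourierCoeffUnit_sum _ fun l _ => by fun_prop]
  refine sum_eq_zero fun l hl => ?_
  rw [fourierCoeffUnit_const_mul, fourierCoeffUnit_mul_exp, hgr, mul_zero]
  rw [mem_Icc] at hl
  omega

theorem fourierCoeffUnit_trigSum_pow_eq_zero (j : ℕ) {k : ℤ} (hk : j * s < k.natAbs) :
    fourierCoeffUnit (fun t => trigSum s a t ^ j) k = 0 := by
  induction j generalizing k with
  | zero => simpa using fourierCoeffUnit_one (k := k) (by omega)
  | succ j ih =>
    simp only [pow_succ]
    exact fourierCoeffUnit_mul_trigSum_eq_zero (by fun_prop) (fun k' hk' => ih hk')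
      (by rw [add_mul, one_mul] at hk; exact hk)

theorem fourierCoeffUnit_aeval_trigSum_eq_zero (P : ℝ[X]) {k : ℤ}
    (hk : P.natDegree * s < k.natAbs) :
    fourierCoeffUnit (fun t => aeval (trigSum s a t) P) k = 0 := by
  simp only [aeval_eq_sum_range, Algebra.smul_def]
  rw [fourierCoeffUnit_sum _ fun j _ => by fun_prop]
  refine sum_eq_zero fun j hj => ?_
  rw [fourierCoeffUnit_const_mul, fourierCoeffUnit_trigSum_pow_eq_zero, mul_zero]
  have := mem_range.1 hj
  nlinarith

end TrigSum

theorem pow_div_add_one_le_rpow_one_div_pow {q : ℝ} (hq0 : 0 ≤ q) (hq1 : q ≤ 1) (s K : ℕ) :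
    q ^ ((K - 1) / s + 1) ≤ (q ^ ((1 : ℝ) / s)) ^ K := by
  rw [← Real.rpow_natCast, ← Real.rpow_natCast, ← Real.rpow_mul hq0]
  refine Real.rpow_le_rpow_of_exponent_ge' hq0 hq1 (by positivity) ?_
  rcases s.eq_zero_or_pos with rfl | hs
  · simp
  · rw [one_div_mul_eq_div, div_le_iff₀ (by positivity)]
    have := Nat.lt_div_mul_add (a := K - 1) hs
    exact_mod_cast (show K ≤ ((K - 1) / s + 1) * s by rw [add_mul, one_mul]; omega)

theorem Function.Periodic.ciInf_mem_range_and_forall_mem_Icc {f : ℝ → ℝ} {c : ℝ}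
    (hp : Function.Periodic f c) (hc : c ≠ 0) (hf : Continuous f) :
    (⨅ t, f t) ∈ Set.range f ∧ ∀ t, f t ∈ Set.Icc (⨅ t, f t) (⨆ t, f t) :=
  have h := hp.compact_of_continuous hc hf
  ⟨h.sInf_mem (Set.range_nonempty f), fun t => ⟨ciInf_le h.bddBelow t, le_ciSup h.bddAbove t⟩⟩

theorem norm_fourierCoeffUnit_inv_le {f : ℝ → ℝ} {m : ℝ} (hm : 0 < m) (hf : ∀ t, m ≤ f t)
    (k : ℤ) : ‖fourierCoeffUnit (fun t => (f t : ℂ)⁻¹) k‖ ≤ 1 / m := by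
  refine norm_fourierCoeffUnit_le (fun t => ?_) k
  rw [← ofReal_inv, norm_real, Real.norm_of_nonneg (inv_nonneg.2 (hm.trans_le (hf t)).le), one_div]
  exact inv_anti₀ hm (hf t)

theorem norm_fourierCoeffUnit_inv_le_of_eq_trigSum {s : ℕ} {a : ℤ → ℂ} {f : ℝ → ℝ}
    (hf : ∀ t, (f t : ℂ) = trigSum s a t) {m u : ℝ} (hm : 0 < m) (hu : 1 ≤ u)
    (hfu : ∀ t, f t ∈ Set.Icc m (m * u ^ 2)) {k : ℤ} (hk : k ≠ 0) :
    ‖fourierCoeffUnit (fun t => (f t : ℂ)⁻¹) k‖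
      ≤ 1 / m * ((1 + u) ^ 2 / (2 * u ^ 2)) * (((u - 1) / (u + 1)) ^ ((1 : ℝ) / s)) ^ k.natAbs := by
  obtain ⟨P, hP, hPf⟩ := exists_poly_approx_inv hm hu ((k.natAbs - 1) / s)
  have hPk : P.natDegree * s < k.natAbs := by
    have := Nat.div_mul_le_self (k.natAbs - 1) s
    have := Int.natAbs_pos.2 hk
    have := Nat.mul_le_mul_right s hP
    omega
  have hfc : Continuous fun t => (f t : ℂ) := by simp only [hf]; fun_prop
  have hsplit := fourierCoeffUnit_sub (g := fun t => (f t : ℂ)⁻¹) (h := fun t => aeval (f t : ℂ) P)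
    (hfc.inv₀ fun t => by simpa using (hm.trans_le (hfu t).1).ne') (by fun_prop) k
  have hzero : fourierCoeffUnit (fun t => aeval (f t : ℂ) P) k = 0 := by
    simpa only [hf] using fourierCoeffUnit_aeval_trigSum_eq_zero P hPk
  rw [hzero, sub_zero] at hsplit
  rw [← hsplit]
  calc _ ≤ 1 / m * ((1 + u) ^ 2 / (2 * u ^ 2)) * ((u - 1) / (u + 1)) ^ ((k.natAbs - 1) / s + 1) :=
        norm_fourierCoeffUnit_le (fun t => ?_) k
    _ ≤ _ := by
        gcongr
        exact pow_div_add_one_le_rpow_one_div_pow (div_nonneg (by linarith) (by linarith))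
          (div_le_one_of_le₀ (by linarith) (by linarith)) s _
  rw [Pi.sub_apply, ← coe_algebraMap, aeval_algebraMap_apply_eq_algebraMap_eval, coe_algebraMap,
    ← ofReal_inv, ← ofReal_sub, norm_real, Real.norm_eq_abs]
  exact hPf _ (hfu t)

theorem banded_reverse_exponential_decay_general (s : ℕ)
    (a : ℤ → ℝ)
    (F : ℝ → ℂ)
    (hF : ∀ t : ℝ, F t = ∑ k ∈ Finset.Icc (-(s : ℤ)) (s : ℤ),
        (a k : ℂ) * Complex.exp (2 * (Real.pi : ℂ) * Complex.I * (k : ℂ) * (t : ℂ)))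
    (hreal : ∀ t : ℝ, (F t).im = 0) (hpos : ∀ t : ℝ, 0 < (F t).re)
    (κ lam C : ℝ)
    (hκ : κ = (⨆ t : ℝ, (F t).re) / (⨅ t : ℝ, (F t).re))
    (hlam : lam = ((Real.sqrt κ - 1) / (Real.sqrt κ + 1)) ^ ((1 : ℝ) / (s : ℝ)))
    (hC : C = (1 / ⨅ t : ℝ, (F t).re) * max 1 ((1 + Real.sqrt κ) ^ 2 / (2 * κ)))
    (b : ℤ → ℂ)
    (hb : ∀ k : ℤ, b k = ∫ t in (0 : ℝ)..1,
        Complex.exp (-(2 * (Real.pi : ℂ) * Complex.I * (k : ℂ) * (t : ℂ))) / F t) :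
    ∀ k : ℤ, ‖b k‖ ≤ C * lam ^ k.natAbs := by
  obtain rfl : F = trigSum s (fun l => a l) := funext hF
  set f : ℝ → ℝ := fun t => (trigSum s (fun l => a l) t).re
  have hfF : ∀ t, (f t : ℂ) = trigSum s (fun l => a l) t := fun t => Complex.ext rfl (hreal t).symm
  obtain ⟨⟨t₀, ht₀⟩, hbounds⟩ := ((periodic_trigSum s _).comp re).ciInf_mem_range_and_forall_mem_Icc
    one_ne_zero (continuous_re.comp (continuous_trigSum s _))
  have hm : 0 < ⨅ t, f t := ht₀ ▸ hpos t₀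
  have hκ1 : 1 ≤ κ := by
    rw [hκ, le_div_iff₀ hm, one_mul]; exact (hbounds t₀).1.trans (hbounds t₀).2
  have hfκ : ∀ t, f t ∈ Set.Icc (⨅ t, f t) ((⨅ t, f t) * √κ ^ 2) := fun t => by
    rw [sq_sqrt (by linarith), hκ, mul_div_cancel₀ _ hm.ne']; exact hbounds t
  intro k
  have hbk : b k = fourierCoeffUnit (fun t => (f t : ℂ)⁻¹) k := by
    simp only [hb, ← hfF, fourierCoeffUnit, div_eq_mul_inv]
  rw [hbk, hC, hlam]
  rcases eq_or_ne k 0 with rfl | hk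
  · rw [Int.natAbs_zero, pow_zero, mul_one]
    exact (norm_fourierCoeffUnit_inv_le hm (fun t => (hbounds t).1) 0).trans
      (le_mul_of_one_le_right (by positivity) (le_max_left _ _))
  · have hu : 1 ≤ √κ := one_le_sqrt.2 hκ1
    have hq : 0 ≤ (√κ - 1) / (√κ + 1) := div_nonneg (by linarith) (by positivity)
    refine (norm_fourierCoeffUnit_inv_le_of_eq_trigSum hfF hm hu hfκ hk).trans ?_
    rw [sq_sqrt (by linarith)]
    gcongr
    exact le_max_right _ _

/-- Exponential decay (after Strohmer/Demko) of the Fourier coefficients of the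
reverse `1/f` of an `s`-banded, positive function
`f(t) = ∑_{|k|≤s} a_k e^{2πikt}`: with `κ = sup f / inf f`,
`λ = ((√κ-1)/(√κ+1))^{1/s}` and `C = (1/inf f)·max{1, (1+√κ)²/(2κ)}`, the Fourier
coefficients `b_k` of `1/f` satisfy `|b_k| ≤ C λ^{|k|}`. -/
theorem banded_reverse_exponential_decay (s : ℕ) (hs : 1 ≤ s)
    (a : ℤ → ℝ) (ha : ∀ k : ℤ, (s : ℤ) < |k| → a k = 0)
    (F : ℝ → ℂ)
    (hF : ∀ t : ℝ, F t = ∑ k ∈ Finset.Icc (-(s : ℤ)) (s : ℤ),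
        (a k : ℂ) * Complex.exp (2 * (Real.pi : ℂ) * Complex.I * (k : ℂ) * (t : ℂ)))
    (hreal : ∀ t : ℝ, (F t).im = 0) (hpos : ∀ t : ℝ, 0 < (F t).re)
    (κ lam C : ℝ)
    (hκ : κ = (⨆ t : ℝ, (F t).re) / (⨅ t : ℝ, (F t).re))
    (hlam : lam = ((Real.sqrt κ - 1) / (Real.sqrt κ + 1)) ^ ((1 : ℝ) / (s : ℝ)))
    (hC : C = (1 / ⨅ t : ℝ, (F t).re) * max 1 ((1 + Real.sqrt κ) ^ 2 / (2 * κ)))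
    (b : ℤ → ℂ)
    (hb : ∀ k : ℤ, b k = ∫ t in (0 : ℝ)..1,
        Complex.exp (-(2 * (Real.pi : ℂ) * Complex.I * (k : ℂ) * (t : ℂ))) / F t) :
    ∀ k : ℤ, ‖b k‖ ≤ C * lam ^ k.natAbs :=
  banded_reverse_exponential_decay_general s a F hF hreal hpos κ lam C hκ hlam hC b hb
end

section
/- Let n ∈ ℕ, ξ > 0, and let r : Fin n → ℂ with |r_i| = 1 for every i. Define q(z) = ∏_{i}(z − (1+ξ)r_i). Then for all z, w ∈ ℂ with |z| = |w| = 1, |q(z)| ≤ (1 + 2/ξ)^n · |q(w)|. Consequently sup_{|z|=1}|q(z)| ≤ (1+2/ξ)^n · inf_{|z|=1}|q(z)|, i.e., κ(q) ≤ (1+2/ξ)^n. -/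
/-! Every root `(1 + ξ) rᵢ` has modulus `1 + ξ`, so for `|z| = 1` the triangle inequality puts each
factor `|z - (1 + ξ) rᵢ|` in `[ξ, 2 + ξ]`. Hence `|q|` takes values in `[ξ ^ n, (2 + ξ) ^ n]` on the
unit circle, and `(2 + ξ) / ξ = 1 + 2 / ξ`. -/

section ProdSub

variable {𝕜 ι : Type*} [NormedField 𝕜] [Fintype ι]

theorem norm_prod_sub_le_pow {z : 𝕜} {a : ι → 𝕜} {R : ℝ} (ha : ∀ i, ‖a i‖ ≤ R) :
    ‖∏ i, (z - a i)‖ ≤ (‖z‖ + R) ^ Fintype.card ι := by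
  rw [norm_prod, ← Finset.card_univ, ← Finset.prod_const]
  refine Finset.prod_le_prod (fun _ _ => norm_nonneg _) fun i _ => ?_
  calc ‖z - a i‖ ≤ ‖z‖ + ‖a i‖ := norm_sub_le _ _
    _ ≤ ‖z‖ + R := by gcongr; exact ha i

theorem pow_le_norm_prod_sub {z : 𝕜} {a : ι → 𝕜} {δ : ℝ} (hδ : 0 ≤ δ)
    (ha : ∀ i, ‖z‖ + δ ≤ ‖a i‖) : δ ^ Fintype.card ι ≤ ‖∏ i, (z - a i)‖ := by
  rw [norm_prod, ← Finset.card_univ, ← Finset.prod_const]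
  refine Finset.prod_le_prod (fun _ _ => hδ) fun i _ => ?_
  calc δ ≤ ‖a i‖ - ‖z‖ := by linarith [ha i]
    _ ≤ ‖a i - z‖ := norm_sub_norm_le _ _
    _ = ‖z - a i‖ := norm_sub_rev _ _

theorem norm_prod_sub_le_mul_of_norm_eq_one {ξ : ℝ} (hξ : 0 < ξ) {a : ι → 𝕜}
    (ha : ∀ i, ‖a i‖ = 1 + ξ) {z w : 𝕜} (hz : ‖z‖ = 1) (hw : ‖w‖ = 1) :
    ‖∏ i, (z - a i)‖ ≤ (1 + 2 / ξ) ^ Fintype.card ι * ‖∏ i, (w - a i)‖ := by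
  have hupper := norm_prod_sub_le_pow (z := z) (a := a) fun i => (ha i).le
  have hlower := pow_le_norm_prod_sub (z := w) (a := a) hξ.le fun i => by rw [hw, ha i, add_comm]
  rw [hz] at hupper
  calc ‖∏ i, (z - a i)‖ ≤ (1 + (1 + ξ)) ^ Fintype.card ι := hupper
    _ = (1 + 2 / ξ) ^ Fintype.card ι * ξ ^ Fintype.card ι := by
      rw [← mul_pow]; congr 1; field_simp; ring
    _ ≤ (1 + 2 / ξ) ^ Fintype.card ι * ‖∏ i, (w - a i)‖ := by gcongr

end ProdSub

theorem ciSup_le_mul_ciInf {α : Type*} [Nonempty α] {f : α → ℝ} {C : ℝ} (hC : 0 < C)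
    (h : ∀ x y, f x ≤ C * f y) : ⨆ x, f x ≤ C * ⨅ x, f x :=
  ciSup_le fun x => (div_le_iff₀' hC).1 <| le_ciInf fun y => (div_le_iff₀' hC).2 (h x y)

/-- For `q(z) = ∏ i, (z - (1+ξ) r i)` with all `r i` on the unit circle and `ξ > 0`:
`|q(z)| ≤ (1+2/ξ)^n |q(w)|` for all unit-modulus `z, w`; consequently
`sup_{|z|=1}|q(z)| ≤ (1+2/ξ)^n · inf_{|z|=1}|q(z)|`, i.e. `κ(q) ≤ (1+2/ξ)^n`. -/
theorem pseudo_approximant_condition_number (n : ℕ) (ξ : ℝ) (hξ : 0 < ξ)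
    (r : Fin n → ℂ) (hr : ∀ i, ‖r i‖ = 1) :
    (∀ z w : ℂ, ‖z‖ = 1 → ‖w‖ = 1 →
      ‖∏ i, (z - ((1 + ξ : ℝ) : ℂ) * r i)‖ ≤
        (1 + 2 / ξ) ^ n * ‖∏ i, (w - ((1 + ξ : ℝ) : ℂ) * r i)‖) ∧
    (⨆ z : Metric.sphere (0 : ℂ) 1, ‖∏ i, ((z : ℂ) - ((1 + ξ : ℝ) : ℂ) * r i)‖ ≤
      (1 + 2 / ξ) ^ n *
        ⨅ z : Metric.sphere (0 : ℂ) 1, ‖∏ i, ((z : ℂ) - ((1 + ξ : ℝ) : ℂ) * r i)‖) := by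
  have hroot : ∀ i, ‖((1 + ξ : ℝ) : ℂ) * r i‖ = 1 + ξ := fun i => by
    rw [norm_mul, hr i, Complex.norm_real, Real.norm_of_nonneg (by linarith), mul_one]
  have hcircle := fun z w hz hw =>
    Fintype.card_fin n ▸ norm_prod_sub_le_mul_of_norm_eq_one hξ hroot (z := z) (w := w) hz hw
  refine ⟨hcircle, ?_⟩
  have : Nonempty (Metric.sphere (0 : ℂ) 1) := ⟨⟨1, by simp⟩⟩
  exact ciSup_le_mul_ciInf (by positivity) fun z w =>
    hcircle z w (mem_sphere_zero_iff_norm.1 z.2) (mem_sphere_zero_iff_norm.1 w.2)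
end

section
/- Let α, α̃ : ℤ → ℝ be finitely supported masks that agree at all odd indices (α_{2k+1} = α̃_{2k+1} for all k), and let γ : ℤ → ℝ be absolutely summable with ∑_{k∈ℤ} α̃_{2k} γ_{m−k} = δ_{m,0} for every m ∈ ℤ. Then for every bounded sequence c : ℤ → ℝ and every j ∈ ℤ, |c_{2j} − (S_α(D_γ c))_{2j}| ≤ ‖α − α̃‖₁ · ‖γ‖₁ · ‖c‖_∞. Equivalently, the operator π^α_γ(c) = [(I − S_α D_γ)c]↓2 (downsampling to the even indices) satisfies ‖π^α_γ‖_op ≤ ‖α − α̃‖₁‖γ‖₁ on ℓ_∞(ℤ). -/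
/-- The subdivision operator `(S_α c)_j = ∑_{k∈ℤ} α_{j-2k} c_k`. -/
noncomputable def subdivision (α : ℤ → ℝ) (c : ℤ → ℝ) : ℤ → ℝ :=
  fun j => ∑' k : ℤ, α (j - 2 * k) * c k

/-- The decimation operator `(D_γ c)_j = ∑_{k∈ℤ} γ_{j-k} c_{2k}`. -/
noncomputable def decimation (γ : ℤ → ℝ) (c : ℤ → ℝ) : ℤ → ℝ :=
  fun j => ∑' k : ℤ, γ (j - k) * c (2 * k)

private lemma abs_tsum_le_aux {f : ℤ → ℝ} (hf : Summable fun i => |f i|) :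
    |∑' i : ℤ, f i| ≤ ∑' i : ℤ, |f i| := by
  simpa only [Real.norm_eq_abs] using
    norm_tsum_le_tsum_norm (f := f) (by simpa only [Real.norm_eq_abs] using hf)

set_option maxHeartbeats 2000000 in
/-- If masks `α, α̃` agree at odd indices and `D_γ` is the reverse of `S_α̃`
(i.e. `∑_k α̃_{2k} γ_{m-k} = δ_{m,0}`), then for every bounded sequence `c` the
even-indexed detail coefficients satisfy
`|c_{2j} - (S_α (D_γ c))_{2j}| ≤ ‖α - α̃‖₁ ‖γ‖₁ ‖c‖_∞`; i.e.
`‖π^α_γ‖_op ≤ ‖α - α̃‖₁ ‖γ‖₁` on `ℓ_∞(ℤ)`. -/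
theorem even_detail_operator_norm_bound (α αt γ : ℤ → ℝ)
    (hα : (Function.support α).Finite) (hαt : (Function.support αt).Finite)
    (hodd : ∀ k : ℤ, α (2 * k + 1) = αt (2 * k + 1))
    (hγ : Summable fun k : ℤ => |γ k|)
    (hrev : ∀ m : ℤ, (∑' k : ℤ, αt (2 * k) * γ (m - k)) = if m = 0 then 1 else 0)
    (c : ℤ → ℝ) (hc : BddAbove (Set.range fun j : ℤ => |c j|)) :
    ∀ j : ℤ, |c (2 * j) - subdivision α (decimation γ c) (2 * j)| ≤
      (∑' k : ℤ, |α k - αt k|) * (∑' k : ℤ, |γ k|) * (⨆ j : ℤ, |c j|) := by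
  intro j
  set M := ⨆ j : ℤ, |c j| with hMdef
  have hcM : ∀ i : ℤ, |c i| ≤ M := fun i => le_ciSup hc i
  have hM0 : 0 ≤ M := (abs_nonneg _).trans (hcM 0)
  have hγ0 : 0 ≤ ∑' k : ℤ, |γ k| := tsum_nonneg fun _ => abs_nonneg _
  -- summability of shifted |γ|
  have hγk : ∀ k : ℤ, Summable fun l : ℤ => |γ (k - l)| := fun k =>
    (Equiv.subLeft k).summable_iff.mpr hγ
  have hγksum : ∀ k : ℤ, (∑' l : ℤ, |γ (k - l)|) = ∑' l : ℤ, |γ l| := fun k =>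
    (Equiv.subLeft k).tsum_eq fun x => |γ x|
  set d := decimation γ c with hddef
  have hdk : ∀ k : ℤ, Summable fun l : ℤ => γ (k - l) * c (2 * l) := by
    intro k
    apply Summable.of_abs
    apply Summable.of_nonneg_of_le (fun l => abs_nonneg _) (fun l => ?_) ((hγk k).mul_right M)
    rw [abs_mul]
    exact mul_le_mul_of_nonneg_left (hcM _) (abs_nonneg _)
  have hdbound : ∀ k : ℤ, |d k| ≤ (∑' l : ℤ, |γ l|) * M := by
    intro k
    have h1 : |d k| ≤ ∑' l : ℤ, |γ (k - l) * c (2 * l)| := by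
      rw [hddef]
      exact abs_tsum_le_aux (hdk k).abs
    refine h1.trans ?_
    have h2 : (∑' l : ℤ, |γ (k - l) * c (2 * l)|) ≤ ∑' l : ℤ, |γ (k - l)| * M := by
      apply Summable.tsum_le_tsum _ (hdk k).abs ((hγk k).mul_right M)
      intro l
      rw [abs_mul]
      exact mul_le_mul_of_nonneg_left (hcM _) (abs_nonneg _)
    refine h2.trans ?_
    rw [tsum_mul_right, hγksum k]
  -- injectivity of k ↦ 2j - 2k
  have hinj : Function.Injective fun k : ℤ => 2 * j - 2 * k := by
    intro a b h; simpa using h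
  have hfinpre : ∀ (β : ℤ → ℝ), (Function.support β).Finite →
      (Function.support fun k : ℤ => β (2 * j - 2 * k)).Finite := by
    intro β hβ
    have : (Function.support fun k : ℤ => β (2 * j - 2 * k)) =
        (fun k : ℤ => 2 * j - 2 * k) ⁻¹' Function.support β := rfl
    rw [this]
    exact hβ.preimage (hinj.injOn)
  have hsummul : ∀ (β : ℤ → ℝ), (Function.support β).Finite →
      Summable (fun k : ℤ => β (2 * j - 2 * k) * d k) := by
    intro β hβ
    apply summable_of_ne_finset_zero (s := (hfinpre β hβ).toFinset)
    intro k hk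
    have : β (2 * j - 2 * k) = 0 := by
      by_contra h
      exact hk ((hfinpre β hβ).mem_toFinset.mpr h)
    simp [this]
  -- key identity: αt reconstructs c at even indices
  have hkey : c (2 * j) = ∑' k : ℤ, αt (2 * j - 2 * k) * d k := by
    set T := (hfinpre αt hαt).toFinset with hT
    have h0 : (∑' k : ℤ, αt (2 * j - 2 * k) * d k) =
        ∑ k ∈ T, αt (2 * j - 2 * k) * d k := by
      apply tsum_eq_sum
      intro k hk
      have : αt (2 * j - 2 * k) = 0 := by
        by_contra h
        exact hk ((hfinpre αt hαt).mem_toFinset.mpr h)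
      simp [this]
    rw [h0]
    have h1 : ∀ k ∈ T, αt (2 * j - 2 * k) * d k =
        ∑' l : ℤ, αt (2 * j - 2 * k) * (γ (k - l) * c (2 * l)) := by
      intro k _
      rw [hddef]
      simp only [decimation]
      rw [tsum_mul_left]
    rw [Finset.sum_congr rfl h1]
    rw [← Summable.tsum_finsetSum (fun k _ => (hdk k).mul_left (αt (2 * j - 2 * k)))]
    have h2 : ∀ l : ℤ, (∑ k ∈ T, αt (2 * j - 2 * k) * (γ (k - l) * c (2 * l))) =
        (if j - l = 0 then (1:ℝ) else 0) * c (2 * l) := by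
      intro l
      have e1 : (∑ k ∈ T, αt (2 * j - 2 * k) * (γ (k - l) * c (2 * l))) =
          (∑ k ∈ T, αt (2 * j - 2 * k) * γ (k - l)) * c (2 * l) := by
        rw [Finset.sum_mul]
        exact Finset.sum_congr rfl fun k _ => by ring
      rw [e1]
      congr 1
      have e2 : (∑ k ∈ T, αt (2 * j - 2 * k) * γ (k - l)) =
          ∑' k : ℤ, αt (2 * j - 2 * k) * γ (k - l) := by
        symm
        apply tsum_eq_sum
        intro k hk
        have : αt (2 * j - 2 * k) = 0 := by
          by_contra h
          exact hk ((hfinpre αt hαt).mem_toFinset.mpr h)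
        simp [this]
      rw [e2]
      have e3 : (∑' k : ℤ, αt (2 * j - 2 * k) * γ (k - l)) =
          ∑' m : ℤ, αt (2 * j - 2 * (j - m)) * γ ((j - m) - l) :=
        ((Equiv.subLeft j).tsum_eq fun k => αt (2 * j - 2 * k) * γ (k - l)).symm
      rw [e3]
      have e4 : ∀ m : ℤ, αt (2 * j - 2 * (j - m)) * γ ((j - m) - l) =
          αt (2 * m) * γ ((j - l) - m) := by
        intro m
        congr 1 <;> ring_nf
      rw [tsum_congr e4, hrev (j - l)]
    rw [tsum_congr h2]
    rw [tsum_eq_single j (fun l hl => by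
      have : ¬ (j - l = 0) := by omega
      simp [this])]
    simp
  -- rewrite the difference
  have hsub : subdivision α d (2 * j) = ∑' k : ℤ, α (2 * j - 2 * k) * d k := rfl
  have hdiff : c (2 * j) - subdivision α d (2 * j) =
      ∑' k : ℤ, (αt (2 * j - 2 * k) - α (2 * j - 2 * k)) * d k := by
    rw [hkey, hsub, ← Summable.tsum_sub (hsummul αt hαt) (hsummul α hα)]
    exact tsum_congr fun k => by ring
  rw [hdiff]
  -- bound
  have hβ : (Function.support fun m : ℤ => |α m - αt m|).Finite := by
    apply Set.Finite.subset (hα.union hαt)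
    intro m hm
    simp only [Function.mem_support] at hm
    by_contra h
    simp only [Set.mem_union, Function.mem_support, not_or, not_not] at h
    rcases h with ⟨h1, h2⟩
    refine hm ?_
    simp [h1, h2]
  have hβsum : Summable fun m : ℤ => |α m - αt m| := by
    apply summable_of_ne_finset_zero (s := hβ.toFinset)
    intro m hm
    by_contra h
    exact hm (hβ.mem_toFinset.mpr h)
  set g : ℤ → ℝ := fun m => αt m - α m with hgdef
  have hgfin : (Function.support g).Finite := by
    apply Set.Finite.subset (hαt.union hα)
    intro m hm
    simp only [Function.mem_support, hgdef] at hm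
    by_contra h
    simp only [Set.mem_union, Function.mem_support, not_or, not_not] at h
    exact hm (by simp [h.1, h.2])
  have hgpre := hfinpre g hgfin
  have habs_summ : Summable fun k : ℤ => |g (2 * j - 2 * k)| := by
    apply summable_of_ne_finset_zero (s := hgpre.toFinset)
    intro k hk
    have : g (2 * j - 2 * k) = 0 := by
      by_contra h
      exact hk (hgpre.mem_toFinset.mpr h)
    simp [this]
  have habs2 : Summable fun k : ℤ => |g (2 * j - 2 * k) * d k| := by
    apply summable_of_ne_finset_zero (s := hgpre.toFinset)
    intro k hk
    have : g (2 * j - 2 * k) = 0 := by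
      by_contra h
      exact hk (hgpre.mem_toFinset.mpr h)
    simp [this]
  have step1 : |∑' k : ℤ, g (2 * j - 2 * k) * d k| ≤
      ∑' k : ℤ, |g (2 * j - 2 * k) * d k| := by
    exact abs_tsum_le_aux habs2
  have step2 : (∑' k : ℤ, |g (2 * j - 2 * k) * d k|) ≤
      ∑' k : ℤ, |g (2 * j - 2 * k)| * ((∑' l : ℤ, |γ l|) * M) := by
    apply Summable.tsum_le_tsum _ habs2 (habs_summ.mul_right _)
    intro k
    rw [abs_mul]
    exact mul_le_mul_of_nonneg_left (hdbound k) (abs_nonneg _)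
  have step3 : (∑' k : ℤ, |g (2 * j - 2 * k)| * ((∑' l : ℤ, |γ l|) * M)) =
      (∑' k : ℤ, |g (2 * j - 2 * k)|) * ((∑' l : ℤ, |γ l|) * M) := tsum_mul_right
  have step4 : (∑' k : ℤ, |g (2 * j - 2 * k)|) ≤ ∑' m : ℤ, |α m - αt m| := by
    apply Summable.tsum_le_tsum_of_inj _ hinj (fun m _ => abs_nonneg _) _ habs_summ hβsum
    intro k
    simp only [hgdef]
    rw [abs_sub_comm]
  calc |∑' k : ℤ, g (2 * j - 2 * k) * d k|
      ≤ ∑' k : ℤ, |g (2 * j - 2 * k) * d k| := step1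
    _ ≤ ∑' k : ℤ, |g (2 * j - 2 * k)| * ((∑' l : ℤ, |γ l|) * M) := step2
    _ = (∑' k : ℤ, |g (2 * j - 2 * k)|) * ((∑' l : ℤ, |γ l|) * M) := step3
    _ ≤ (∑' m : ℤ, |α m - αt m|) * ((∑' l : ℤ, |γ l|) * M) := by
        exact mul_le_mul_of_nonneg_right step4 (mul_nonneg hγ0 hM0)
    _ = (∑' m : ℤ, |α m - αt m|) * (∑' l : ℤ, |γ l|) * M := by ring
end

section
/- Let α, α̃ : ℤ → ℝ be finitely supported masks that agree at all odd indices, with ∑_{k} α_{2k} = 1 and ∑_{k} α̃_{2k} = 1, and let γ : ℤ → ℝ satisfy ∑_{j∈ℤ}|γ_j|·|j| < ∞ and ∑_{k∈ℤ} α̃_{2k} γ_{m−k} = δ_{m,0} for every m ∈ ℤ. Set K_x = 2∑_{j∈ℤ}|x_j|·|j| and L = ‖α − α̃‖₁·K_γ + ‖γ‖₁·K_{α−α̃}. Then for every bounded sequence c : ℤ → ℝ with Δc = sup_{i∈ℤ}|c_{i+1} − c_i| finite, and every j ∈ ℤ, |c_{2j} − (S_α(D_γ c))_{2j}| ≤ L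 · Δc. -/
private lemma lip_aux (c : ℤ → ℝ) (Δ : ℝ) (h : ∀ i : ℤ, |c (i + 1) - c i| ≤ Δ) :
    ∀ (n : ℕ) (a : ℤ), |c (a + n) - c a| ≤ n * Δ := by
  intro n
  induction n with
  | zero => intro a; simp
  | succ n ih =>
    intro a
    have e : (a + ((n : ℕ) + 1 : ℕ) : ℤ) = (a + n) + 1 := by push_cast; ring
    rw [e]
    calc |c (a + n + 1) - c a|
        ≤ |c (a + n + 1) - c (a + n)| + |c (a + n) - c a| := abs_sub_le _ _ _
      _ ≤ Δ + n * Δ := add_le_add (h (a + n)) (ih a)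
      _ = ((n + 1 : ℕ) : ℝ) * Δ := by push_cast; ring

private lemma lip (c : ℤ → ℝ) (Δ : ℝ) (h : ∀ i : ℤ, |c (i + 1) - c i| ≤ Δ) :
    ∀ m n : ℤ, |c m - c n| ≤ |(m : ℝ) - (n : ℝ)| * Δ := by
  have key : ∀ m n : ℤ, n ≤ m → |c m - c n| ≤ |(m : ℝ) - (n : ℝ)| * Δ := by
    intro m n hnm
    have e : m = n + ((m - n).toNat : ℤ) := by omega
    have h1 := lip_aux c Δ h (m - n).toNat n
    rw [← e] at h1
    refine h1.trans_eq ?_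
    congr 1
    rw [abs_of_nonneg (sub_nonneg.mpr (by exact_mod_cast hnm))]
    rw [show (((m - n).toNat : ℕ) : ℝ) = (((m - n).toNat : ℤ) : ℝ) by push_cast; ring,
      Int.toNat_of_nonneg (by omega : (0:ℤ) ≤ m - n)]
    push_cast
    ring
  intro m n
  rcases le_total n m with hle | hle
  · exact key m n hle
  · rw [abs_sub_comm, abs_sub_comm (m : ℝ)]
    exact key n m hle

private lemma support_comp_finite {F : ℤ → ℝ} (hF : (Function.support F).Finite)
    {g : ℤ → ℤ} (hg : Function.Injective g) :
    (Function.support fun k => F (g k)).Finite := by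
  have : (Function.support fun k => F (g k)) = g ⁻¹' Function.support F := rfl
  rw [this]
  exact hF.preimage hg.injOn

private lemma support_mul_left {f g : ℤ → ℝ} (hf : (Function.support f).Finite) :
    (Function.support fun k => f k * g k).Finite := by
  apply hf.subset
  intro k hk
  simp only [Function.mem_support] at hk ⊢
  exact fun h => hk (by rw [h, zero_mul])

set_option maxHeartbeats 2000000 in
/-- With masks `α, α̃` agreeing at odd indices, both even parts summing to `1`,
and `γ` the reverse of `α̃ ↓ 2`, the even detail coefficient of one analysis step
satisfies `|c_{2j} - (S_α (D_γ c))_{2j}| ≤ L · Δc`, where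
`L = ‖α - α̃‖₁ K_γ + ‖γ‖₁ K_{α-α̃}` and `K_x = 2 ∑_j |x_j|·|j|`. -/
theorem even_detail_difference_bound (α αt γ : ℤ → ℝ)
    (hα : (Function.support α).Finite) (hαt : (Function.support αt).Finite)
    (hodd : ∀ k : ℤ, α (2 * k + 1) = αt (2 * k + 1))
    (hαsum : (∑' k : ℤ, α (2 * k)) = 1) (hαtsum : (∑' k : ℤ, αt (2 * k)) = 1)
    (hγ : Summable fun k : ℤ => |γ k|)
    (hγ1 : Summable fun j : ℤ => |γ j| * |(j : ℝ)|)
    (hrev : ∀ m : ℤ, (∑' k : ℤ, αt (2 * k) * γ (m - k)) = if m = 0 then 1 else 0)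
    (c : ℤ → ℝ) (hc : BddAbove (Set.range fun j : ℤ => |c j|))
    (hΔ : BddAbove (Set.range fun i : ℤ => |c (i + 1) - c i|)) :
    ∀ j : ℤ, |c (2 * j) - subdivision α (decimation γ c) (2 * j)| ≤
      ((∑' k : ℤ, |α k - αt k|) * (2 * ∑' i : ℤ, |γ i| * |(i : ℝ)|) +
        (∑' k : ℤ, |γ k|) * (2 * ∑' i : ℤ, |α i - αt i| * |(i : ℝ)|)) *
      (⨆ i : ℤ, |c (i + 1) - c i|) := by
  classical
  intro j
  set Δ := ⨆ i : ℤ, |c (i + 1) - c i| with hΔdef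
  have hstep : ∀ i : ℤ, |c (i + 1) - c i| ≤ Δ := fun i => le_ciSup hΔ i
  have hΔ0 : 0 ≤ Δ := (abs_nonneg _).trans (hstep 0)
  have hlip := lip c Δ hstep
  obtain ⟨C, hC⟩ : ∃ C : ℝ, ∀ i : ℤ, |c i| ≤ C := by
    obtain ⟨C, hC⟩ := hc
    exact ⟨C, fun i => hC (Set.mem_range_self i)⟩
  have hγs : Summable γ := by
    rw [← summable_abs_iff]; exact hγ
  have htrL : ∀ k : ℤ, Summable fun m : ℤ => |γ (k - m)| := fun k =>
    (Equiv.subLeft k).summable_iff.mpr hγ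
  have htrLγ : ∀ k : ℤ, Summable fun m : ℤ => γ (k - m) := fun k =>
    (Equiv.subLeft k).summable_iff.mpr hγs
  have hdsum : ∀ k : ℤ, Summable fun m : ℤ => γ (k - m) * c (2 * m) := by
    intro k
    apply Summable.of_abs
    apply Summable.of_nonneg_of_le (fun m => abs_nonneg _) (fun m => ?_) ((htrL k).mul_right C)
    rw [abs_mul]
    exact mul_le_mul_of_nonneg_left (hC _) (abs_nonneg _)
  have hg2 : Function.Injective fun k : ℤ => 2 * k := by
    intro x y h; simp only at h; omega
  have hgj : Function.Injective fun k : ℤ => 2 * j - 2 * k := by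
    intro x y h; simp only at h; omega
  have hgjk : Function.Injective fun k : ℤ => j - k := by
    intro x y h; simp only at h; omega
  -- total sum of γ is 1
  have hG2fin : (Function.support fun k : ℤ => αt (2 * k)).Finite := support_comp_finite hαt hg2
  have hT1 : (∑' m : ℤ, γ m) = 1 := by
    set G2 := hG2fin.toFinset with hG2
    have hG2mem : ∀ k : ℤ, k ∉ G2 → αt (2 * k) = 0 := by
      intro k hk; by_contra h; exact hk (hG2fin.mem_toFinset.mpr h)
    have hrow : ∀ m : ℤ, (∑' k : ℤ, αt (2 * k) * γ (m - k)) = ∑ k ∈ G2, αt (2 * k) * γ (m - k) := by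
      intro m
      exact tsum_eq_sum (fun k hk => by rw [hG2mem k hk, zero_mul])
    have hδ : (∑' m : ℤ, ∑ k ∈ G2, αt (2 * k) * γ (m - k)) = 1 := by
      have hh : ∀ m : ℤ, (∑ k ∈ G2, αt (2 * k) * γ (m - k)) = if m = 0 then (1:ℝ) else 0 :=
        fun m => (hrow m).symm.trans (hrev m)
      rw [tsum_congr hh]
      exact tsum_ite_eq 0 1
    have hswap : (∑' m : ℤ, ∑ k ∈ G2, αt (2 * k) * γ (m - k))
        = ∑ k ∈ G2, ∑' m : ℤ, αt (2 * k) * γ (m - k) :=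
      Summable.tsum_finsetSum (fun k _ => ((Equiv.subRight k).summable_iff.mpr hγs).mul_left _)
    have hcol : ∀ k : ℤ, (∑' m : ℤ, αt (2 * k) * γ (m - k)) = αt (2 * k) * ∑' m : ℤ, γ m := by
      intro k
      rw [tsum_mul_left]
      congr 1
      exact (Equiv.subRight k).tsum_eq γ
    rw [hswap] at hδ
    rw [Finset.sum_congr rfl (fun k _ => hcol k), ← Finset.sum_mul] at hδ
    have hsum2 : (∑ k ∈ G2, αt (2 * k)) = 1 := by
      rw [← hαtsum]
      exact (tsum_eq_sum (fun k hk => hG2mem k hk)).symm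
    rw [hsum2, one_mul] at hδ
    exact hδ
  have hTk : ∀ k : ℤ, (∑' m : ℤ, γ (k - m)) = 1 :=
    fun k => ((Equiv.subLeft k).tsum_eq γ).trans hT1
  have hGge1 : (1:ℝ) ≤ ∑' k : ℤ, |γ k| := by
    have h1 : |∑' m : ℤ, γ m| ≤ ∑' k : ℤ, |γ k| := by
      have := norm_tsum_le_tsum_norm (f := γ) (by simpa [Real.norm_eq_abs] using hγ)
      simpa [Real.norm_eq_abs] using this
    rw [hT1] at h1
    simpa using h1
  -- the even difference mask
  set e : ℤ → ℝ := fun k => αt (2 * k) - α (2 * k) with he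
  have hefin : (Function.support e).Finite := by
    refine Set.Finite.subset (hG2fin.union (support_comp_finite hα hg2)) ?_
    intro k hk
    by_contra hcon
    simp only [Set.mem_union, Function.mem_support, not_or, not_not] at hcon
    exact hk (by simp [he, hcon.1, hcon.2])
  have heabs : (Function.support fun i : ℤ => |e i|).Finite := by
    apply hefin.subset
    intro k hk
    simp only [Function.mem_support] at hk ⊢
    exact fun h => hk (by rw [h, abs_zero])
  set d := decimation γ c with hd
  have hFtfin : (Function.support fun k : ℤ => αt (2 * j - 2 * k)).Finite :=
    support_comp_finite hαt hgj
  set F := hFtfin.toFinset with hF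
  have hFmem : ∀ k : ℤ, k ∉ F → αt (2 * j - 2 * k) = 0 := by
    intro k hk; by_contra h; exact hk (hFtfin.mem_toFinset.mpr h)
  -- Step (i): biorthogonality reproduces c at even indices
  have claim1 : subdivision αt d (2 * j) = c (2 * j) := by
    have step1 : subdivision αt d (2 * j) = ∑ k ∈ F, αt (2 * j - 2 * k) * d k :=
      tsum_eq_sum (fun k hk => by rw [hFmem k hk, zero_mul])
    have step2 : ∀ k : ℤ, αt (2 * j - 2 * k) * d k
        = ∑' m : ℤ, αt (2 * j - 2 * k) * (γ (k - m) * c (2 * m)) := by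
      intro k
      have hdk : d k = ∑' m : ℤ, γ (k - m) * c (2 * m) := rfl
      rw [hdk, ← tsum_mul_left]
    have step3 : (∑ k ∈ F, ∑' m : ℤ, αt (2 * j - 2 * k) * (γ (k - m) * c (2 * m)))
        = ∑' m : ℤ, ∑ k ∈ F, αt (2 * j - 2 * k) * (γ (k - m) * c (2 * m)) :=
      (Summable.tsum_finsetSum fun k _ => (hdsum k).mul_left _).symm
    have step4 : ∀ m : ℤ, (∑ k ∈ F, αt (2 * j - 2 * k) * (γ (k - m) * c (2 * m)))
        = (if m = j then (1:ℝ) else 0) * c (2 * m) := by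
      intro m
      have h1 : (∑ k ∈ F, αt (2 * j - 2 * k) * γ (k - m)) = if j - m = 0 then 1 else 0 := by
        rw [← tsum_eq_sum (L := SummationFilter.unconditional ℤ) (f := fun k => αt (2 * j - 2 * k) * γ (k - m))
          (fun k hk => by show αt (2 * j - 2 * k) * γ (k - m) = 0; rw [hFmem k hk, zero_mul])]
        have h2 : ∀ k : ℤ, αt (2 * j - 2 * k) * γ (k - m)
            = (fun i => αt (2 * i) * γ (j - m - i)) ((Equiv.subLeft j) k) := by
          intro k
          simp only [Equiv.subLeft_apply]
          rw [show 2 * (j - k) = 2 * j - 2 * k by ring, show j - m - (j - k) = k - m by ring]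
        rw [tsum_congr h2]
        exact ((Equiv.subLeft j).tsum_eq fun i => αt (2 * i) * γ (j - m - i)).trans (hrev (j - m))
      calc (∑ k ∈ F, αt (2 * j - 2 * k) * (γ (k - m) * c (2 * m)))
          = (∑ k ∈ F, αt (2 * j - 2 * k) * γ (k - m)) * c (2 * m) := by
            rw [Finset.sum_mul]; exact Finset.sum_congr rfl (fun k _ => by ring)
        _ = (if m = j then (1:ℝ) else 0) * c (2 * m) := by
            rw [h1]
            congr 1
            by_cases h : m = j
            · rw [if_pos (by omega), if_pos h]
            · rw [if_neg (by omega), if_neg h]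
    calc subdivision αt d (2 * j) = ∑ k ∈ F, αt (2 * j - 2 * k) * d k := step1
      _ = ∑ k ∈ F, ∑' m : ℤ, αt (2 * j - 2 * k) * (γ (k - m) * c (2 * m)) :=
          Finset.sum_congr rfl fun k _ => step2 k
      _ = ∑' m : ℤ, ∑ k ∈ F, αt (2 * j - 2 * k) * (γ (k - m) * c (2 * m)) := step3
      _ = ∑' m : ℤ, (if m = j then (1:ℝ) else 0) * c (2 * m) := tsum_congr step4
      _ = c (2 * j) := by
          have hh : ∀ m : ℤ, (if m = j then (1:ℝ) else 0) * c (2 * m)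
              = if m = j then c (2 * j) else 0 := by
            intro m
            by_cases h : m = j
            · subst h; simp
            · simp [h]
          rw [tsum_congr hh]
          exact tsum_ite_eq j (fun _ => c (2 * j))
  -- Step (ii): difference representation
  have hsub_fin : (Function.support fun k : ℤ => αt (2 * j - 2 * k) * d k).Finite :=
    support_mul_left hFtfin
  have hsub_fin' : (Function.support fun k : ℤ => α (2 * j - 2 * k) * d k).Finite :=
    support_mul_left (support_comp_finite hα hgj)
  have claim2 : c (2 * j) - subdivision α d (2 * j) = ∑' k : ℤ, e (j - k) * d k := by
    rw [← claim1]
    have hh : subdivision αt d (2 * j) - subdivision α d (2 * j)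
        = ∑' k : ℤ, (αt (2 * j - 2 * k) * d k - α (2 * j - 2 * k) * d k) :=
      (Summable.tsum_sub (summable_of_finite_support hsub_fin)
        (summable_of_finite_support hsub_fin')).symm
    rw [hh]
    apply tsum_congr
    intro k
    have h2 : (2 * (j - k) : ℤ) = 2 * j - 2 * k := by ring
    simp only [he, h2]
    ring
  -- Step (iii): recentering
  have hejk_fin : (Function.support fun k : ℤ => e (j - k)).Finite :=
    support_comp_finite hefin hgjk
  have hesum0 : (∑' k : ℤ, e (j - k)) = 0 := by
    have h1 : (∑' k : ℤ, e (j - k)) = ∑' k : ℤ, e k := (Equiv.subLeft j).tsum_eq e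
    have h2 : (∑' k : ℤ, e k) = (∑' k : ℤ, αt (2 * k)) - ∑' k : ℤ, α (2 * k) := by
      simp only [he]
      exact Summable.tsum_sub (summable_of_finite_support hG2fin)
        (summable_of_finite_support (support_comp_finite hα hg2))
    rw [h1, h2, hαsum, hαtsum]
    ring
  have claim3 : (∑' k : ℤ, e (j - k) * d k) = ∑' k : ℤ, e (j - k) * (d k - c (2 * j)) := by
    have hs1 : Summable fun k : ℤ => e (j - k) * d k :=
      summable_of_finite_support (support_mul_left hejk_fin)
    have hs2 : Summable fun k : ℤ => e (j - k) * c (2 * j) :=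
      summable_of_finite_support (support_mul_left hejk_fin)
    have hh : (∑' k : ℤ, e (j - k) * (d k - c (2 * j)))
        = (∑' k : ℤ, e (j - k) * d k) - ∑' k : ℤ, e (j - k) * c (2 * j) := by
      rw [← Summable.tsum_sub hs1 hs2]
      exact tsum_congr fun k => by ring
    rw [hh, tsum_mul_right, hesum0, zero_mul, sub_zero]
  -- Step (iv): pointwise deviation bound
  set G1 := ∑' i : ℤ, |γ i| * |(i : ℝ)| with hG1def
  have hG1nn : 0 ≤ G1 := tsum_nonneg fun i => mul_nonneg (abs_nonneg _) (abs_nonneg _)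
  have hdev : ∀ k : ℤ, |d k - c (2 * k)| ≤ G1 * (2 * Δ) := by
    intro k
    have hrep : d k - c (2 * k) = ∑' m : ℤ, γ (k - m) * (c (2 * m) - c (2 * k)) := by
      have h1 : (∑' m : ℤ, γ (k - m) * (c (2 * m) - c (2 * k)))
          = (∑' m : ℤ, γ (k - m) * c (2 * m)) - ∑' m : ℤ, γ (k - m) * c (2 * k) := by
        rw [← Summable.tsum_sub (hdsum k) ((htrLγ k).mul_right _)]
        exact tsum_congr fun m => by ring
      rw [h1, tsum_mul_right, hTk k, one_mul]
      rfl
    rw [hrep]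
    have hbound : ∀ m : ℤ, |γ (k - m) * (c (2 * m) - c (2 * k))|
        ≤ (fun i : ℤ => |γ i| * |(i : ℝ)| * (2 * Δ)) (k - m) := by
      intro m
      simp only
      rw [abs_mul]
      have h3 : |((2 * m : ℤ) : ℝ) - ((2 * k : ℤ) : ℝ)| = |((k - m : ℤ) : ℝ)| * 2 := by
        push_cast
        rw [show ((2:ℝ) * m - 2 * k) = -(2 * ((k:ℝ) - m)) by ring, abs_neg, abs_mul,
          abs_of_nonneg (by norm_num : (0:ℝ) ≤ 2)]
        ring
      calc |γ (k - m)| * |c (2 * m) - c (2 * k)|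
          ≤ |γ (k - m)| * (|((k - m : ℤ) : ℝ)| * 2 * Δ) := by
            apply mul_le_mul_of_nonneg_left _ (abs_nonneg _)
            calc |c (2 * m) - c (2 * k)| ≤ |((2 * m : ℤ) : ℝ) - ((2 * k : ℤ) : ℝ)| * Δ :=
                  hlip (2 * m) (2 * k)
              _ = |((k - m : ℤ) : ℝ)| * 2 * Δ := by rw [h3]
        _ = |γ (k - m)| * |((k - m : ℤ) : ℝ)| * (2 * Δ) := by ring
    have hgsum : Summable fun m : ℤ => (fun i : ℤ => |γ i| * |(i : ℝ)| * (2 * Δ)) (k - m) :=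
      (Equiv.subLeft k).summable_iff.mpr (hγ1.mul_right (2 * Δ))
    have hsummand : Summable fun m : ℤ => |γ (k - m) * (c (2 * m) - c (2 * k))| :=
      Summable.of_nonneg_of_le (fun m => abs_nonneg _) hbound hgsum
    calc |∑' m : ℤ, γ (k - m) * (c (2 * m) - c (2 * k))|
        ≤ ∑' m : ℤ, |γ (k - m) * (c (2 * m) - c (2 * k))| := by
          have hh := norm_tsum_le_tsum_norm
            (f := fun m : ℤ => γ (k - m) * (c (2 * m) - c (2 * k)))
            (by simp only [Real.norm_eq_abs]; exact hsummand)
          simp only [Real.norm_eq_abs] at hh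
          exact hh
      _ ≤ ∑' m : ℤ, (fun i : ℤ => |γ i| * |(i : ℝ)| * (2 * Δ)) (k - m) :=
          Summable.tsum_le_tsum hbound hsummand hgsum
      _ = ∑' m : ℤ, (fun i : ℤ => |γ i| * |(i : ℝ)| * (2 * Δ)) ((Equiv.subLeft k) m) :=
          tsum_congr fun m => by rw [Equiv.subLeft_apply]
      _ = ∑' i : ℤ, |γ i| * |(i : ℝ)| * (2 * Δ) :=
          (Equiv.subLeft k).tsum_eq (fun i : ℤ => |γ i| * |(i : ℝ)| * (2 * Δ))
      _ = G1 * (2 * Δ) := by rw [hG1def, tsum_mul_right]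
  have hptbound : ∀ k : ℤ, |d k - c (2 * j)| ≤ G1 * (2 * Δ) + |((j - k : ℤ) : ℝ)| * (2 * Δ) := by
    intro k
    calc |d k - c (2 * j)| ≤ |d k - c (2 * k)| + |c (2 * k) - c (2 * j)| := abs_sub_le _ _ _
      _ ≤ G1 * (2 * Δ) + |((j - k : ℤ) : ℝ)| * (2 * Δ) := by
          refine add_le_add (hdev k) ?_
          calc |c (2 * k) - c (2 * j)| ≤ |((2 * k : ℤ) : ℝ) - ((2 * j : ℤ) : ℝ)| * Δ :=
                hlip (2 * k) (2 * j)
            _ = |((j - k : ℤ) : ℝ)| * (2 * Δ) := by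
                push_cast
                rw [show ((2:ℝ) * k - 2 * j) = -(2 * ((j:ℝ) - k)) by ring, abs_neg, abs_mul,
                  abs_of_nonneg (by norm_num : (0:ℝ) ≤ 2)]
                ring
  -- Step (v): sum the bound
  have hE2nn : (0:ℝ) ≤ ∑' i : ℤ, |e i| * |(i : ℝ)| :=
    tsum_nonneg fun i => mul_nonneg (abs_nonneg _) (abs_nonneg _)
  have hfinbound : |∑' k : ℤ, e (j - k) * (d k - c (2 * j))|
      ≤ (∑' i : ℤ, |e i|) * (G1 * (2 * Δ)) + (∑' i : ℤ, |e i| * |(i : ℝ)|) * (2 * Δ) := by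
    set g : ℤ → ℝ := fun i => |e i| * (G1 * (2 * Δ) + |(i : ℝ)| * (2 * Δ)) with hgdef
    have hgfin : (Function.support g).Finite := support_mul_left heabs
    have hsg : Summable g := summable_of_finite_support hgfin
    have hsg' : Summable fun k : ℤ => g (j - k) :=
      summable_of_finite_support (support_comp_finite hgfin hgjk)
    have hpt : ∀ k : ℤ, |e (j - k) * (d k - c (2 * j))| ≤ g (j - k) := by
      intro k
      simp only [hgdef]
      rw [abs_mul]
      exact mul_le_mul_of_nonneg_left (hptbound k) (abs_nonneg _)
    have hsum_lhs : Summable fun k : ℤ => |e (j - k) * (d k - c (2 * j))| := by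
      apply summable_of_finite_support
      apply (support_comp_finite hefin hgjk).subset
      intro k hk
      simp only [Function.mem_support] at hk ⊢
      exact fun h => hk (by rw [abs_eq_zero, h, zero_mul])
    have hs1 : Summable fun i : ℤ => |e i| * (G1 * (2 * Δ)) :=
      summable_of_finite_support (support_mul_left heabs)
    have hs2 : Summable fun i : ℤ => (|e i| * |(i : ℝ)|) * (2 * Δ) := by
      apply summable_of_finite_support
      apply heabs.subset
      intro k hk
      simp only [Function.mem_support] at hk ⊢
      exact fun h => hk (by rw [h, zero_mul, zero_mul])
    calc |∑' k : ℤ, e (j - k) * (d k - c (2 * j))|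
        ≤ ∑' k : ℤ, |e (j - k) * (d k - c (2 * j))| := by
          have hh := norm_tsum_le_tsum_norm
            (f := fun k : ℤ => e (j - k) * (d k - c (2 * j)))
            (by simp only [Real.norm_eq_abs]; exact hsum_lhs)
          simp only [Real.norm_eq_abs] at hh
          exact hh
      _ ≤ ∑' k : ℤ, g (j - k) := Summable.tsum_le_tsum hpt hsum_lhs hsg'
      _ = ∑' k : ℤ, g ((Equiv.subLeft j) k) := tsum_congr fun k => by rw [Equiv.subLeft_apply]
      _ = ∑' i : ℤ, g i := (Equiv.subLeft j).tsum_eq g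
      _ = ∑' i : ℤ, (|e i| * (G1 * (2 * Δ)) + (|e i| * |(i : ℝ)|) * (2 * Δ)) :=
          tsum_congr fun i => by simp only [hgdef]; ring
      _ = (∑' i : ℤ, |e i| * (G1 * (2 * Δ))) + ∑' i : ℤ, (|e i| * |(i : ℝ)|) * (2 * Δ) :=
          Summable.tsum_add hs1 hs2
      _ = (∑' i : ℤ, |e i|) * (G1 * (2 * Δ)) + (∑' i : ℤ, |e i| * |(i : ℝ)|) * (2 * Δ) := by
          rw [tsum_mul_right, tsum_mul_right]
  -- relate ∑|e| and ∑|e|·|i| to the mask differences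
  have hss : (Function.support fun n : ℤ => |α n - αt n|) ⊆ Set.range (fun k : ℤ => 2 * k) := by
    intro n hn
    by_contra hcon
    have hzero : α n - αt n = 0 := by
      have : ∃ k : ℤ, n = 2 * k + 1 := by
        rcases Int.even_or_odd n with ⟨k, hk⟩ | ⟨k, hk⟩
        · exact absurd ⟨k, by show 2 * k = n; omega⟩ hcon
        · exact ⟨k, by omega⟩
      obtain ⟨k, rfl⟩ := this
      rw [hodd k, sub_self]
    exact hn (show |α n - αt n| = 0 by rw [hzero, abs_zero])
  have hss2 : (Function.support fun n : ℤ => |α n - αt n| * |(n : ℝ)|)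
      ⊆ Set.range (fun k : ℤ => 2 * k) := by
    intro n hn
    apply hss
    simp only [Function.mem_support] at hn ⊢
    exact fun h => hn (by rw [h, zero_mul])
  have hAe : (∑' k : ℤ, |e k|) = ∑' k : ℤ, |α k - αt k| := by
    have h0 : (∑' k : ℤ, (fun n : ℤ => |α n - αt n|) ((fun k : ℤ => 2 * k) k))
        = ∑' k : ℤ, |α k - αt k| := hg2.tsum_eq (f := fun n : ℤ => |α n - αt n|) hss
    rw [← h0]
    refine tsum_congr fun k => ?_
    show |e k| = |α (2 * k) - αt (2 * k)|
    simp only [he]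
    exact abs_sub_comm _ _
  have hBe : (∑' i : ℤ, |α i - αt i| * |(i : ℝ)|) = (∑' i : ℤ, |e i| * |(i : ℝ)|) * 2 := by
    have h0 : (∑' k : ℤ, (fun n : ℤ => |α n - αt n| * |(n : ℝ)|) ((fun k : ℤ => 2 * k) k))
        = ∑' i : ℤ, |α i - αt i| * |(i : ℝ)| :=
      hg2.tsum_eq (f := fun n : ℤ => |α n - αt n| * |(n : ℝ)|) hss2
    rw [← h0, ← tsum_mul_right]
    refine tsum_congr fun k => ?_
    show |α (2 * k) - αt (2 * k)| * |((2 * k : ℤ) : ℝ)| = |e k| * |(k : ℝ)| * 2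
    simp only [he]
    rw [abs_sub_comm]
    push_cast
    rw [abs_mul, abs_of_nonneg (by norm_num : (0:ℝ) ≤ 2)]
    ring
  -- finish
  rw [claim2, claim3]
  refine hfinbound.trans ?_
  rw [hAe, hBe] at *
  set A := ∑' k : ℤ, |α k - αt k| with hA
  set G := ∑' k : ℤ, |γ k| with hG
  set E2 := ∑' i : ℤ, |e i| * |(i : ℝ)| with hE2
  nlinarith [mul_nonneg (mul_nonneg hE2nn hΔ0) (by linarith : (0:ℝ) ≤ 2 * G - 1)]
end

section
/- Let α, α̃ : ℤ → ℝ be finitely supported masks that agree at all odd indices, with ∑_{k} α_{2k} = 1 and ∑_{k} α̃_{2k} = 1, and let γ : ℤ → ℝ satisfy ∑_{j∈ℤ}|γ_j|·|j| < ∞ and ∑_{k∈ℤ} α̃_{2k} γ_{m−k} = δ_{m,0} for every m ∈ ℤ. Let f : ℝ → ℝ be a bounded differentiable function with M = sup_{x∈ℝ}|f′(x)| < ∞, fix J ∈ ℕ with J ≥ 1, and define c^{(J)}_j = f(j/2^J) for j ∈ ℤ. Define recursively c^{(ℓ−1)} = D_γ c^{(ℓ)} and d^{(ℓ)} = c^{(ℓ)}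 − S_α c^{(ℓ−1)} for ℓ = J, J−1, …, 1. Set K_x = 2∑_{j}|x_j|·|j|, L = ‖α − α̃‖₁·K_γ + ‖γ‖₁·K_{α−α̃}, and P = L·‖γ‖₁^J·M. Then for every ℓ ∈ {1,…,J} and every j ∈ ℤ, |d^{(ℓ)}_{2j}| ≤ P·(2‖γ‖₁)^{−ℓ}. -/
namespace EDGD

lemma tele (d : ℤ → ℝ) (D : ℝ) (h : ∀ k, |d (k + 1) - d k| ≤ D) :
    ∀ a b : ℤ, |d a - d b| ≤ ((|a - b| : ℤ) : ℝ) * D := by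
  have key : ∀ n : ℕ, ∀ b : ℤ, |d (b + n) - d b| ≤ (n : ℝ) * D := by
    intro n
    induction n with
    | zero => intro b; simp
    | succ n ih =>
      intro b
      have h1 := h (b + n)
      have h2 := ih b
      have e : d (b + ((n : ℤ) + 1)) - d b
          = (d (b + n + 1) - d (b + n)) + (d (b + n) - d b) := by
        have : b + ((n : ℤ) + 1) = b + n + 1 := by ring
        rw [this]; ring
      calc |d (b + ((n : ℕ) + 1 : ℕ)) - d b|
          = |(d (b + n + 1) - d (b + n)) + (d (b + n) - d b)| := by push_cast; rw [e]
        _ ≤ |d (b + n + 1) - d (b + n)| + |d (b + n) - d b| := abs_add_le _ _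
        _ ≤ D + n * D := add_le_add h1 h2
        _ = ((n : ℕ) + 1 : ℕ) * D := by push_cast; ring
  intro a b
  rcases le_total b a with hab | hab
  · obtain ⟨n, rfl⟩ : ∃ n : ℕ, a = b + n := ⟨(a - b).toNat, by omega⟩
    have e : (|b + (n : ℤ) - b| : ℤ) = (n : ℤ) := by
      rw [show b + (n : ℤ) - b = (n : ℤ) from by ring]
      exact abs_of_nonneg (by positivity)
    rw [e]; push_cast; exact key n b
  · obtain ⟨n, rfl⟩ : ∃ n : ℕ, b = a + n := ⟨(b - a).toNat, by omega⟩
    have e : (|a - (a + (n : ℤ))| : ℤ) = (n : ℤ) := by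
      rw [show a - (a + (n : ℤ)) = -(n : ℤ) from by ring, abs_neg]
      exact abs_of_nonneg (by positivity)
    rw [abs_sub_comm, e]; push_cast; exact key n a

variable {γ : ℤ → ℝ}

lemma shift_summable (hγ : Summable fun k : ℤ => |γ k|) (j : ℤ) :
    Summable fun m : ℤ => |γ (j - m)| :=
  ((Equiv.subLeft j).summable_iff (f := fun k : ℤ => |γ k|)).mpr hγ

lemma shift_tsum (hγ : Summable fun k : ℤ => |γ k|) (j : ℤ) :
    (∑' m : ℤ, |γ (j - m)|) = ∑' k : ℤ, |γ k| :=
  (Equiv.subLeft j).tsum_eq (fun k : ℤ => |γ k|)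

lemma dec_summable (hγ : Summable fun k : ℤ => |γ k|) {c : ℤ → ℝ} {B : ℝ}
    (hc : ∀ k, |c k| ≤ B) (j : ℤ) (g : ℤ → ℤ) :
    Summable fun m : ℤ => γ (j - m) * c (g m) :=
  Summable.of_norm_bounded ((shift_summable hγ j).mul_right B) (fun m => by
    rw [Real.norm_eq_abs, abs_mul]
    exact mul_le_mul_of_nonneg_left (hc _) (abs_nonneg _))

lemma dec_bound (hγ : Summable fun k : ℤ => |γ k|) {c : ℤ → ℝ} {B : ℝ}
    (hB : 0 ≤ B) (hc : ∀ k, |c k| ≤ B) (j : ℤ) :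
    |decimation γ c j| ≤ (∑' k : ℤ, |γ k|) * B := by
  have hs : Summable fun m : ℤ => |γ (j - m)| * |c (2 * m)| := by
    simpa [abs_mul] using (dec_summable hγ hc j (fun m => 2*m)).abs
  have h1 : |decimation γ c j| ≤ ∑' m : ℤ, |γ (j - m)| * |c (2 * m)| := by
    simpa [decimation, Real.norm_eq_abs] using
      norm_tsum_le_tsum_norm (f := fun m : ℤ => γ (j - m) * c (2 * m)) (by
        simpa [Real.norm_eq_abs, abs_mul] using (dec_summable hγ hc j (fun m => 2*m)).abs)
  refine h1.trans ?_
  calc ∑' m : ℤ, |γ (j - m)| * |c (2 * m)| ≤ ∑' m : ℤ, |γ (j - m)| * B :=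
        Summable.tsum_le_tsum (fun m => mul_le_mul_of_nonneg_left (hc _) (abs_nonneg _)) hs
          ((shift_summable hγ j).mul_right B)
    _ = (∑' k : ℤ, |γ k|) * B := by rw [tsum_mul_right, shift_tsum hγ]


lemma dec_diff (hγ : Summable fun k : ℤ => |γ k|) {c : ℤ → ℝ} {B D : ℝ}
    (hc : ∀ k, |c k| ≤ B) (hD : 0 ≤ D) (hd : ∀ k, |c (k + 1) - c k| ≤ D) (k : ℤ) :
    |decimation γ c (k + 1) - decimation γ c k| ≤ (∑' i : ℤ, |γ i|) * (2 * D) := by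
  have hshift : decimation γ c (k + 1) = ∑' m : ℤ, γ (k - m) * c (2 * m + 2) := by
    rw [decimation]
    rw [← (Equiv.addRight (1 : ℤ)).tsum_eq (fun m : ℤ => γ (k + 1 - m) * c (2 * m))]
    exact tsum_congr fun m => by
      simp only [Equiv.coe_addRight]
      rw [show k + 1 - (m + 1) = k - m from by ring, show 2 * (m + 1) = 2 * m + 2 from by ring]
  have hs1 : Summable fun m : ℤ => γ (k - m) * c (2 * m + 2) :=
    dec_summable hγ hc k (fun m => 2 * m + 2)
  have hs2 : Summable fun m : ℤ => γ (k - m) * c (2 * m) :=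
    dec_summable hγ hc k (fun m => 2 * m)
  have hsub : decimation γ c (k + 1) - decimation γ c k
      = ∑' m : ℤ, γ (k - m) * (c (2 * m + 2) - c (2 * m)) := by
    rw [hshift, decimation, ← Summable.tsum_sub hs1 hs2]
    exact tsum_congr fun m => by ring
  have hdd : ∀ m : ℤ, |c (2 * m + 2) - c (2 * m)| ≤ 2 * D := by
    intro m
    have e : c (2 * m + 2) - c (2 * m)
        = (c (2 * m + 1 + 1) - c (2 * m + 1)) + (c (2 * m + 1) - c (2 * m)) := by
      rw [show 2 * m + 1 + 1 = 2 * m + 2 from by ring]; ring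
    rw [e]
    calc |_ + _| ≤ _ := abs_add_le _ _
      _ ≤ D + D := add_le_add (hd _) (hd _)
      _ = 2 * D := by ring
  rw [hsub]
  have habs : |∑' m : ℤ, γ (k - m) * (c (2 * m + 2) - c (2 * m))|
      ≤ ∑' m : ℤ, |γ (k - m)| * |c (2 * m + 2) - c (2 * m)| := by
    have hsa : Summable fun m : ℤ => |γ (k - m)| * |c (2 * m + 2) - c (2 * m)| := by
      exact (((hs1.sub hs2).congr (fun m => by ring)).abs).congr (fun m => abs_mul _ _)
    simpa [Real.norm_eq_abs, abs_mul] using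
      norm_tsum_le_tsum_norm (f := fun m : ℤ => γ (k - m) * (c (2 * m + 2) - c (2 * m)))
        (by simpa [Real.norm_eq_abs, abs_mul] using hsa)
  refine habs.trans ?_
  have hsa : Summable fun m : ℤ => |γ (k - m)| * |c (2 * m + 2) - c (2 * m)| := by
    exact (((hs1.sub hs2).congr (fun m => by ring)).abs).congr (fun m => abs_mul _ _)
  calc ∑' m : ℤ, |γ (k - m)| * |c (2 * m + 2) - c (2 * m)|
      ≤ ∑' m : ℤ, |γ (k - m)| * (2 * D) :=
        Summable.tsum_le_tsum (fun m => mul_le_mul_of_nonneg_left (hdd m) (abs_nonneg _)) hsa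
          ((shift_summable hγ k).mul_right _)
    _ = (∑' i : ℤ, |γ i|) * (2 * D) := by rw [tsum_mul_right, shift_tsum hγ]

lemma iter_bounds (hγ : Summable fun k : ℤ => |γ k|) {c0 : ℤ → ℝ} {B D0 : ℝ}
    (hB : 0 ≤ B) (hc0 : ∀ k, |c0 k| ≤ B) (hD0 : 0 ≤ D0)
    (hd0 : ∀ k, |c0 (k + 1) - c0 k| ≤ D0) (n : ℕ) :
    (∀ k, |(decimation γ)^[n] c0 k| ≤ B * (∑' i : ℤ, |γ i|) ^ n) ∧
    (∀ k, |(decimation γ)^[n] c0 (k + 1) - (decimation γ)^[n] c0 k|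
        ≤ (2 * ∑' i : ℤ, |γ i|) ^ n * D0) := by
  set N := ∑' i : ℤ, |γ i| with hN
  have hN0 : 0 ≤ N := tsum_nonneg fun _ => abs_nonneg _
  induction n with
  | zero => simpa using ⟨hc0, hd0⟩
  | succ n ih =>
    obtain ⟨ihb, ihd⟩ := ih
    constructor
    · intro k
      rw [Function.iterate_succ_apply']
      calc |decimation γ ((decimation γ)^[n] c0) k| ≤ N * (B * N ^ n) :=
            dec_bound hγ (by positivity) ihb k
        _ = B * N ^ (n + 1) := by ring
    · intro k
      rw [Function.iterate_succ_apply']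
      calc |decimation γ ((decimation γ)^[n] c0) (k + 1)
            - decimation γ ((decimation γ)^[n] c0) k|
          ≤ N * (2 * ((2 * N) ^ n * D0)) := dec_diff hγ ihb (by positivity) ihd k
        _ = (2 * N) ^ (n + 1) * D0 := by ring


end EDGD

namespace EDGD

lemma core (α αt γ : ℤ → ℝ)
    (hα : (Function.support α).Finite) (hαt : (Function.support αt).Finite)
    (hαsum : (∑' k : ℤ, α (2 * k)) = 1) (hαtsum : (∑' k : ℤ, αt (2 * k)) = 1)
    (hγ : Summable fun k : ℤ => |γ k|)
    (hrev : ∀ m : ℤ, (∑' k : ℤ, αt (2 * k) * γ (m - k)) = if m = 0 then 1 else 0)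
    {c : ℤ → ℝ} {B D : ℝ} (hB : 0 ≤ B) (hc : ∀ k, |c k| ≤ B)
    (hD : 0 ≤ D) (hd : ∀ k, |c (k + 1) - c k| ≤ D) (j : ℤ) :
    |c (2 * j) - subdivision α (decimation γ c) (2 * j)|
      ≤ (∑' m : ℤ, |α m - αt m| * |(m : ℝ)|) * ((∑' i : ℤ, |γ i|) * D) := by
  classical
  set e := decimation γ c with he_def
  set N := ∑' i : ℤ, |γ i| with hN_def
  have hN0 : 0 ≤ N := tsum_nonneg fun _ => abs_nonneg _
  have he : ∀ k, |e k| ≤ N * B := fun k => dec_bound hγ hB hc k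
  have hde : ∀ k, |e (k + 1) - e k| ≤ N * (2 * D) := fun k => dec_diff hγ hc hD hd k
  have heNB : 0 ≤ N * B := by positivity
  set s : Finset ℤ := hα.toFinset ∪ hαt.toFinset with hs_def
  have hαs : ∀ m, m ∉ s → α m = 0 := by
    intro m hm
    by_contra h
    exact hm (Finset.mem_union_left _ (hα.mem_toFinset.2 h))
  have hαts : ∀ m, m ∉ s → αt m = 0 := by
    intro m hm
    by_contra h
    exact hm (Finset.mem_union_right _ (hαt.mem_toFinset.2 h))
  set t : Finset ℤ := s.image (fun m => m / 2) with ht_def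
  have hmem_t : ∀ k : ℤ, (2 * k) ∈ s → k ∈ t := fun k hk =>
    Finset.mem_image.2 ⟨2 * k, hk, by omega⟩
  have hα0 : ∀ k ∉ t, α (2 * k) = 0 := fun k hk => by
    by_contra h
    exact hk (hmem_t k (by by_contra hs'; exact h (hαs _ hs')))
  have hαt0 : ∀ k ∉ t, αt (2 * k) = 0 := fun k hk => by
    by_contra h
    exact hk (hmem_t k (by by_contra hs'; exact h (hαts _ hs')))
  set t2 : Finset ℤ := s.image (fun m => j - m / 2) with ht2_def
  have hmem_t2 : ∀ k : ℤ, (2 * j - 2 * k) ∈ s → k ∈ t2 := fun k hk =>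
    Finset.mem_image.2 ⟨2 * j - 2 * k, hk, by omega⟩
  -- summability of subdivision sums
  have hS : ∀ x : ℤ → ℝ, (∀ m, m ∉ s → x m = 0) →
      Summable fun k : ℤ => x (2 * j - 2 * k) * e k := by
    intro x hx
    refine summable_of_ne_finset_zero (s := t2) fun k hk => ?_
    have : x (2 * j - 2 * k) = 0 := by
      by_contra h
      exact hk (hmem_t2 k (by by_contra hs'; exact h (hx _ hs')))
    rw [this, zero_mul]
  have hS1 := hS αt hαts
  have hS2 := hS α hαs
  -- reindexing lemma
  have hrx : ∀ x : ℤ → ℝ, (∑' k : ℤ, x (2 * j - 2 * k) * e k)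
      = ∑' k : ℤ, x (2 * k) * e (j - k) := by
    intro x
    rw [← (Equiv.subLeft j).tsum_eq (fun k : ℤ => x (2 * j - 2 * k) * e k)]
    exact tsum_congr fun k => by
      simp only [Equiv.subLeft_apply]
      rw [show 2 * j - 2 * (j - k) = 2 * k from by ring]
  -- Claim A : the αt-subdivision reproduces c at even indices
  have hA : (∑' k : ℤ, αt (2 * j - 2 * k) * e k) = c (2 * j) := by
    rw [hrx αt, tsum_eq_sum (s := t) (fun k hk => by rw [hαt0 k hk, zero_mul])]
    have hA3 : ∀ k ∈ t, Summable fun m : ℤ => αt (2 * k) * (γ (j - k - m) * c (2 * m)) :=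
      fun k _ => ((dec_summable hγ hc (j - k) (fun m => 2 * m)).mul_left _)
    calc ∑ k ∈ t, αt (2 * k) * e (j - k)
        = ∑ k ∈ t, ∑' m : ℤ, αt (2 * k) * (γ (j - k - m) * c (2 * m)) := by
          refine Finset.sum_congr rfl fun k _ => ?_
          rw [tsum_mul_left]
          rfl
      _ = ∑' m : ℤ, ∑ k ∈ t, αt (2 * k) * (γ (j - k - m) * c (2 * m)) :=
          (Summable.tsum_finsetSum hA3).symm
      _ = ∑' m : ℤ, (if j - m = 0 then (1:ℝ) else 0) * c (2 * m) := by
          refine tsum_congr fun m => ?_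
          have h1 : (∑ k ∈ t, αt (2 * k) * (γ (j - k - m) * c (2 * m)))
              = (∑' k : ℤ, αt (2 * k) * γ (j - m - k)) * c (2 * m) := by
            rw [tsum_eq_sum (s := t) (fun k hk => by rw [hαt0 k hk, zero_mul]),
              Finset.sum_mul]
            refine Finset.sum_congr rfl fun k _ => ?_
            rw [show j - m - k = j - k - m from by ring]; ring
          rw [h1, hrev (j - m)]
      _ = c (2 * j) := by
          rw [tsum_eq_single j (fun m hm => by rw [if_neg (by omega), zero_mul])]
          simp
  -- difference as a finite sum
  have hdiff : c (2 * j) - subdivision α e (2 * j)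
      = ∑ k ∈ t, (αt (2 * k) - α (2 * k)) * e (j - k) := by
    have h1 : c (2 * j) - subdivision α e (2 * j)
        = ∑' k : ℤ, (αt (2 * j - 2 * k) * e k - α (2 * j - 2 * k) * e k) := by
      rw [Summable.tsum_sub hS1 hS2, hA]; rfl
    rw [h1]
    have h2 : ∀ k : ℤ, (αt (2 * j - 2 * k) * e k - α (2 * j - 2 * k) * e k)
        = (fun m => αt m - α m) (2 * j - 2 * k) * e k := fun k => by simp [sub_mul]
    rw [tsum_congr h2, hrx (fun m => αt m - α m),
      tsum_eq_sum (s := t) (fun k hk => by simp [hαt0 k hk, hα0 k hk])]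
  -- the centered sum
  have hzero : (∑ k ∈ t, (αt (2 * k) - α (2 * k))) = 0 := by
    rw [Finset.sum_sub_distrib,
      ← tsum_eq_sum (L := SummationFilter.unconditional ℤ) (s := t) (fun k hk => hαt0 k hk),
      ← tsum_eq_sum (L := SummationFilter.unconditional ℤ) (s := t) (fun k hk => hα0 k hk), hαtsum, hαsum, sub_self]
  have hcenter : (∑ k ∈ t, (αt (2 * k) - α (2 * k)) * e (j - k))
      = ∑ k ∈ t, (αt (2 * k) - α (2 * k)) * (e (j - k) - e j) := by
    have : (∑ k ∈ t, (αt (2 * k) - α (2 * k)) * (e (j - k) - e j))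
        = ∑ k ∈ t, (αt (2 * k) - α (2 * k)) * e (j - k)
          - (∑ k ∈ t, (αt (2 * k) - α (2 * k))) * e j := by
      rw [Finset.sum_mul, ← Finset.sum_sub_distrib]
      exact Finset.sum_congr rfl fun k _ => by ring
    rw [this, hzero]; ring
  -- bound the centered sum
  have hbound : |∑ k ∈ t, (αt (2 * k) - α (2 * k)) * (e (j - k) - e j)|
      ≤ (∑ k ∈ t, |α (2 * k) - αt (2 * k)| * |(k : ℝ)|) * (N * (2 * D)) := by
    calc |∑ k ∈ t, (αt (2 * k) - α (2 * k)) * (e (j - k) - e j)|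
        ≤ ∑ k ∈ t, |(αt (2 * k) - α (2 * k)) * (e (j - k) - e j)| :=
          Finset.abs_sum_le_sum_abs _ _
      _ ≤ ∑ k ∈ t, |α (2 * k) - αt (2 * k)| * (|(k : ℝ)| * (N * (2 * D))) := by
          refine Finset.sum_le_sum fun k _ => ?_
          rw [abs_mul, abs_sub_comm (αt (2 * k))]
          refine mul_le_mul_of_nonneg_left ?_ (abs_nonneg _)
          have h3 := tele e (N * (2 * D)) hde (j - k) j
          have h4 : ((|j - k - j| : ℤ) : ℝ) = |(k : ℝ)| := by
            rw [show j - k - j = -k from by ring, abs_neg]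
            push_cast [Int.cast_abs]; rfl
          rwa [h4] at h3
      _ = (∑ k ∈ t, |α (2 * k) - αt (2 * k)| * |(k : ℝ)|) * (N * (2 * D)) := by
          rw [Finset.sum_mul]
          exact Finset.sum_congr rfl fun k _ => by ring
  -- the half-K estimate
  have hK : (∑ k ∈ t, |α (2 * k) - αt (2 * k)| * |(k : ℝ)|)
      ≤ (1 / 2) * ∑' m : ℤ, |α m - αt m| * |(m : ℝ)| := by
    have hKs : Summable fun m : ℤ => |α m - αt m| * |(m : ℝ)| :=
      summable_of_ne_finset_zero (s := s) fun m hm => by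
        rw [hαs m hm, hαts m hm, sub_zero, abs_zero, zero_mul]
    have himg : (∑ m ∈ t.image (fun k => 2 * k), |α m - αt m| * |(m : ℝ)|)
        = ∑ k ∈ t, |α (2 * k) - αt (2 * k)| * |((2 * k : ℤ) : ℝ)| :=
      Finset.sum_image (fun x _ y _ h => by omega)
    have hle : (∑ m ∈ t.image (fun k => 2 * k), |α m - αt m| * |(m : ℝ)|)
        ≤ ∑' m : ℤ, |α m - αt m| * |(m : ℝ)| :=
      Summable.sum_le_tsum _ (fun m _ => by positivity) hKs
    have h2 : (∑ k ∈ t, |α (2 * k) - αt (2 * k)| * |(k : ℝ)|) * 2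
        = ∑ k ∈ t, |α (2 * k) - αt (2 * k)| * |((2 * k : ℤ) : ℝ)| := by
      rw [Finset.sum_mul]
      refine Finset.sum_congr rfl fun k _ => ?_
      push_cast
      rw [abs_mul, abs_two]
      ring
    have hle2 := himg ▸ hle
    nlinarith [hle2, h2]
  -- put it together
  have h2ND : (0:ℝ) ≤ N * (2 * D) := by positivity
  calc |c (2 * j) - subdivision α e (2 * j)|
      = |∑ k ∈ t, (αt (2 * k) - α (2 * k)) * (e (j - k) - e j)| := by
        rw [hdiff, hcenter]
    _ ≤ (∑ k ∈ t, |α (2 * k) - αt (2 * k)| * |(k : ℝ)|) * (N * (2 * D)) := hbound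
    _ ≤ ((1 / 2) * ∑' m : ℤ, |α m - αt m| * |(m : ℝ)|) * (N * (2 * D)) :=
        mul_le_mul_of_nonneg_right hK h2ND
    _ = (∑' m : ℤ, |α m - αt m| * |(m : ℝ)|) * (N * D) := by ring


end EDGD

/-- Geometric decay of the even-indexed detail coefficients of the pyramid
analysis of samples `c^{(J)}_j = f(j/2^J)` of a bounded differentiable `f` with
`|f'| ≤ M`: writing `c^{(ℓ)} = (D_γ)^{J-ℓ} c^{(J)}` and
`d^{(ℓ)} = c^{(ℓ)} - S_α c^{(ℓ-1)}`, it holds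
`|d^{(ℓ)}_{2j}| ≤ P (2‖γ‖₁)^{-ℓ}` with `P = L ‖γ‖₁^J M` and
`L = ‖α - α̃‖₁ K_γ + ‖γ‖₁ K_{α-α̃}`, `K_x = 2∑_j |x_j||j|`. -/
theorem even_detail_geometric_decay (α αt γ : ℤ → ℝ)
    (hα : (Function.support α).Finite) (hαt : (Function.support αt).Finite)
    (hodd : ∀ k : ℤ, α (2 * k + 1) = αt (2 * k + 1))
    (hαsum : (∑' k : ℤ, α (2 * k)) = 1) (hαtsum : (∑' k : ℤ, αt (2 * k)) = 1)
    (hγ : Summable fun k : ℤ => |γ k|)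
    (hγ1 : Summable fun j : ℤ => |γ j| * |(j : ℝ)|)
    (hrev : ∀ m : ℤ, (∑' k : ℤ, αt (2 * k) * γ (m - k)) = if m = 0 then 1 else 0)
    (f : ℝ → ℝ) (hf : Differentiable ℝ f) (hfb : ∃ B : ℝ, ∀ x : ℝ, |f x| ≤ B)
    (M : ℝ) (hM : ∀ x : ℝ, |deriv f x| ≤ M)
    (J : ℕ) (hJ : 1 ≤ J) :
    ∀ ℓ : ℕ, 1 ≤ ℓ → ℓ ≤ J → ∀ j : ℤ,
      |(decimation γ)^[J - ℓ] (fun i : ℤ => f ((i : ℝ) / 2 ^ J)) (2 * j) -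
        subdivision α ((decimation γ)^[J - (ℓ - 1)] (fun i : ℤ => f ((i : ℝ) / 2 ^ J))) (2 * j)|
      ≤ (((∑' k : ℤ, |α k - αt k|) * (2 * ∑' i : ℤ, |γ i| * |(i : ℝ)|) +
            (∑' k : ℤ, |γ k|) * (2 * ∑' i : ℤ, |α i - αt i| * |(i : ℝ)|)) *
          (∑' k : ℤ, |γ k|) ^ J * M) *
        (2 * ∑' k : ℤ, |γ k|) ^ (-(ℓ : ℤ)) := by
  intro ℓ hℓ1 hℓJ j
  obtain ⟨B, hBf⟩ := hfb
  have hB0 : (0:ℝ) ≤ B := (abs_nonneg _).trans (hBf 0)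
  have hM0 : (0:ℝ) ≤ M := (abs_nonneg _).trans (hM 0)
  set c0 : ℤ → ℝ := fun i : ℤ => f ((i : ℝ) / 2 ^ J) with hc0_def
  have hc0 : ∀ k : ℤ, |c0 k| ≤ B := fun k => hBf _
  have hd0 : ∀ k : ℤ, |c0 (k + 1) - c0 k| ≤ M / 2 ^ J := by
    intro k
    have := Convex.norm_image_sub_le_of_norm_deriv_le (𝕜 := ℝ) (f := f)
      (s := Set.univ) (C := M) (fun x _ => hf x)
      (fun x _ => by rw [Real.norm_eq_abs]; exact hM x) convex_univ
      (Set.mem_univ ((k : ℝ) / 2 ^ J)) (Set.mem_univ (((k : ℤ) + 1 : ℤ) / 2 ^ J : ℝ))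
    simp only [Real.norm_eq_abs] at this
    have he : |(((k + 1 : ℤ) : ℝ) / 2 ^ J) - ((k : ℝ) / 2 ^ J)| = 1 / 2 ^ J := by
      push_cast
      rw [show ((k : ℝ) + 1) / 2 ^ J - (k : ℝ) / 2 ^ J = 1 / 2 ^ J from by ring]
      rw [abs_of_pos (by positivity)]
    calc |c0 (k + 1) - c0 k| ≤ M * |(((k + 1 : ℤ) : ℝ) / 2 ^ J) - ((k : ℝ) / 2 ^ J)| := by
          simpa [hc0_def] using this
      _ = M / 2 ^ J := by rw [he]; ring
  set N := ∑' i : ℤ, |γ i| with hN_def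
  have hN0 : 0 ≤ N := tsum_nonneg fun _ => abs_nonneg _
  have hNpos : 0 < N := by
    rcases lt_or_eq_of_le hN0 with h | h
    · exact h
    · exfalso
      have hγ0 : ∀ k : ℤ, γ k = 0 := by
        intro k
        have h1 : |γ k| ≤ N := Summable.le_tsum hγ k (fun _ _ => abs_nonneg _)
        rw [← h] at h1
        exact abs_eq_zero.1 (le_antisymm h1 (abs_nonneg _))
      have := hrev 0
      simp only [hγ0, mul_zero, tsum_zero, if_pos rfl] at this
      exact zero_ne_one this
  set n := J - ℓ with hn_def
  have hJn : J = n + ℓ := by omega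
  have hit : J - (ℓ - 1) = n + 1 := by omega
  obtain ⟨hcB, hcd⟩ := EDGD.iter_bounds hγ hB0 hc0 (by positivity) hd0 n
  set c := (decimation γ)^[n] c0 with hc_def
  have hkey := EDGD.core α αt γ hα hαt hαsum hαtsum hγ hrev (by positivity) hcB
    (by positivity) hcd j
  rw [hit, Function.iterate_succ_apply']
  set K := ∑' m : ℤ, |α m - αt m| * |(m : ℝ)| with hK_def
  have hK0 : 0 ≤ K := tsum_nonneg fun _ => by positivity
  set C1 := (∑' k : ℤ, |α k - αt k|) * (2 * ∑' i : ℤ, |γ i| * |(i : ℝ)|) with hC1_def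
  have hC10 : 0 ≤ C1 := by
    have h1 : 0 ≤ ∑' k : ℤ, |α k - αt k| := tsum_nonneg fun _ => abs_nonneg _
    have h2 : 0 ≤ ∑' i : ℤ, |γ i| * |(i : ℝ)| := tsum_nonneg fun _ => by positivity
    positivity
  have hz : (2 * N) ^ (-(ℓ : ℤ)) = ((2 * N) ^ ℓ)⁻¹ := by
    rw [zpow_neg, zpow_natCast]
  rw [hz]
  have hNne : N ≠ 0 := ne_of_gt hNpos
  have h2ℓ : (0:ℝ) < (2 * N) ^ ℓ := by positivity
  have heq : (N * (2 * K) * N ^ J * M) * ((2 * N) ^ ℓ)⁻¹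
      = 2 * (K * (N * ((2 * N) ^ n * (M / 2 ^ J)))) := by
    rw [hJn, pow_add, mul_pow]
    have h2 : ((2:ℝ)) ^ (n + ℓ) = 2 ^ n * 2 ^ ℓ := pow_add 2 n ℓ
    field_simp
    ring
  have hrhs : (((∑' k : ℤ, |α k - αt k|) * (2 * ∑' i : ℤ, |γ i| * |(i : ℝ)|) +
        N * (2 * K)) * N ^ J * M) * ((2 * N) ^ ℓ)⁻¹
      = C1 * N ^ J * M * ((2 * N) ^ ℓ)⁻¹ + (N * (2 * K) * N ^ J * M) * ((2 * N) ^ ℓ)⁻¹ := by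
    ring
  rw [hrhs, heq]
  have hbd0 : 0 ≤ K * (N * ((2 * N) ^ n * (M / 2 ^ J))) := by positivity
  have hC1t : 0 ≤ C1 * N ^ J * M * ((2 * N) ^ ℓ)⁻¹ := by positivity
  linarith [hkey]
end

section
/- Let α : ℤ → ℝ be a finitely supported mask and γ : ℤ → ℝ an absolutely summable sequence. Fix J ∈ ℕ with J ≥ 1 and a bounded sequence c^{(J)} : ℤ → ℝ, and define the analysis recursively by c^{(ℓ−1)} = D_γ c^{(ℓ)} and d^{(ℓ)} = c^{(ℓ)} − S_α c^{(ℓ−1)} for ℓ = J,…,1. Define q^{(ℓ)} by q^{(ℓ)}_j = d^{(ℓ)}_j for odd j and q^{(ℓ)}_j = 0 for even j, and synthesize ζ^{(0)} = c^{(0)}, ζ^{(ℓ)} = S_α ζ^{(ℓ−1)} + q^{(ℓ)} for ℓ = 1,…,J. Then sup_{j∈ℤ}|c^{(J)}_j − ζ^{(J)}_j| ≤ ∑_{ℓ=1}^{J} ‖S_α‖^{J−ℓ} · sup_{j∈ℤ}|d^{(ℓ)}_{2j}|, where ‖S_α‖ = max{∑_{k}|α_{2k}|, ∑_{k}|α_{2k+1}|}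 is the operator norm of S_α on ℓ_∞(ℤ). In particular, with C = max{1, ‖S_α‖^J}, the reconstruction error after discarding all even-indexed detail coefficients satisfies ‖c^{(J)} − ζ^{(J)}‖_∞ ≤ C·∑_{ℓ=1}^{J} ‖d^{(ℓ)}↓2‖_∞. -/
/-- `‖S_α‖`: the output `(S_α c)_j` only sees the mask coefficients of the parity of `j`. -/
noncomputable def subdivisionNorm (α : ℤ → ℝ) : ℝ :=
  max (∑' k : ℤ, |α (2 * k)|) (∑' k : ℤ, |α (2 * k + 1)|)

lemma injective_sub_two_mul (j : ℤ) : Function.Injective fun k : ℤ => j - 2 * k :=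
  fun a b h => by simp only at h; omega

lemma summable_subdivision_terms {α : ℤ → ℝ} (hα : (Function.support α).Finite)
    (c : ℤ → ℝ) (j : ℤ) : Summable fun k => α (j - 2 * k) * c k :=
  summable_of_hasFiniteSupport <| (hα.preimage (injective_sub_two_mul j).injOn).subset
    (Function.support_mul_subset_left _ _)

lemma tsum_abs_comp_sub_two_mul_le_subdivisionNorm (α : ℤ → ℝ) (j : ℤ) :
    ∑' k, |α (j - 2 * k)| ≤ subdivisionNorm α := by
  have shift (r m : ℤ) : ∑' k, |α (2 * m + r - 2 * k)| = ∑' k, |α (2 * k + r)| := by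
    rw [← (Equiv.subLeft m).tsum_eq]
    exact tsum_congr fun k => by simp only [Equiv.subLeft_apply]; ring_nf
  obtain ⟨m, rfl | rfl⟩ := Int.even_or_odd' j
  · have h0 := shift 0 m
    simp only [add_zero] at h0
    exact h0.le.trans (le_max_left _ _)
  · exact (shift 1 m).le.trans (le_max_right _ _)

lemma abs_subdivision_le {α : ℤ → ℝ} (hα : (Function.support α).Finite) {c : ℤ → ℝ} {M : ℝ}
    (hc : ∀ k, |c k| ≤ M) (j : ℤ) : |subdivision α c j| ≤ subdivisionNorm α * M := by
  have hsum : Summable fun k => |α (j - 2 * k)| := by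
    simpa only [mul_one] using (summable_subdivision_terms hα (fun _ => 1) j).abs
  calc |subdivision α c j| ≤ (∑' k, |α (j - 2 * k)|) * M :=
        tsum_of_norm_bounded (hsum.hasSum.mul_right M) fun k => by
          rw [Real.norm_eq_abs, abs_mul]
          exact mul_le_mul_of_nonneg_left (hc k) (abs_nonneg _)
    _ ≤ subdivisionNorm α * M :=
        mul_le_mul_of_nonneg_right (tsum_abs_comp_sub_two_mul_le_subdivisionNorm α j)
          ((abs_nonneg _).trans (hc 0))

lemma subdivision_sub {α : ℤ → ℝ} (hα : (Function.support α).Finite) (c c' : ℤ → ℝ) :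
    subdivision α (c - c') = subdivision α c - subdivision α c' := by
  funext j
  simp only [subdivision, Pi.sub_apply, mul_sub]
  exact (summable_subdivision_terms hα c j).tsum_sub (summable_subdivision_terms hα c' j)

lemma abs_decimation_le {γ : ℤ → ℝ} (hγ : Summable fun k => |γ k|) {c : ℤ → ℝ} {M : ℝ}
    (hc : ∀ k, |c k| ≤ M) (j : ℤ) : |decimation γ c j| ≤ (∑' k, |γ k|) * M := by
  have hshift : HasSum (fun k => |γ (j - k)|) (∑' k, |γ k|) :=
    (Equiv.subLeft j).hasSum_iff.2 hγ.hasSum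
  exact tsum_of_norm_bounded (hshift.mul_right M) fun k => by
    rw [Real.norm_eq_abs, abs_mul]
    exact mul_le_mul_of_nonneg_left (hc (2 * k)) (abs_nonneg _)

lemma abs_iterate_decimation_le {γ : ℤ → ℝ} (hγ : Summable fun k => |γ k|) {c : ℤ → ℝ}
    {M : ℝ} (hc : ∀ k, |c k| ≤ M) (n : ℕ) (j : ℤ) :
    |(decimation γ)^[n] c j| ≤ (∑' k, |γ k|) ^ n * M := by
  induction n generalizing j with
  | zero => simpa using hc j
  | succ n ih =>
    rw [Function.iterate_succ_apply', pow_succ', mul_assoc]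
    exact abs_decimation_le hγ ih j

lemma abs_sub_ite_odd_le {d : ℤ → ℝ} (hd : BddAbove (Set.range fun i => |d (2 * i)|))
    (j : ℤ) : |d j - if Odd j then d j else 0| ≤ ⨆ i, |d (2 * i)| := by
  split_ifs with hj
  · simpa using (abs_nonneg _).trans (le_ciSup hd 0)
  · obtain ⟨i, rfl⟩ : 2 ∣ j := (Int.not_odd_iff_even.mp hj).two_dvd
    rw [sub_zero]
    exact le_ciSup hd i

lemma sum_Icc_pow_mul_succ {R : Type*} [CommSemiring R] (N : R) (D : ℕ → R) (n : ℕ) :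
    ∑ i ∈ Finset.Icc 1 (n + 1), N ^ (n + 1 - i) * D i =
      N * ∑ i ∈ Finset.Icc 1 n, N ^ (n - i) * D i + D (n + 1) := by
  rw [Finset.sum_Icc_succ_top (by omega), Finset.mul_sum, Nat.sub_self, pow_zero, one_mul]
  congr 1
  refine Finset.sum_congr rfl fun i hi => ?_
  rw [Nat.sub_add_comm (Finset.mem_Icc.mp hi).2, pow_succ]
  ring

theorem abs_sub_synthesis_le {α : ℤ → ℝ} (hα : (Function.support α).Finite)
    {c ζ d q : ℕ → ℤ → ℝ} {J : ℕ}
    (hc : ∀ ℓ, 1 ≤ ℓ → ℓ ≤ J → ∀ j, c ℓ j = subdivision α (c (ℓ - 1)) j + d ℓ j)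
    (hζ0 : ζ 0 = c 0)
    (hζ : ∀ ℓ, 1 ≤ ℓ → ℓ ≤ J → ∀ j, ζ ℓ j = subdivision α (ζ (ℓ - 1)) j + q ℓ j)
    (hq : ∀ ℓ j, q ℓ j = if Odd j then d ℓ j else 0)
    (hd : ∀ ℓ, 1 ≤ ℓ → ℓ ≤ J → BddAbove (Set.range fun i => |d ℓ (2 * i)|)) :
    ∀ ℓ ≤ J, ∀ j, |c ℓ j - ζ ℓ j| ≤
      ∑ i ∈ Finset.Icc 1 ℓ, subdivisionNorm α ^ (ℓ - i) * ⨆ k, |d i (2 * k)| := by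
  intro ℓ
  induction ℓ with
  | zero => intro _ j; simp [hζ0]
  | succ n ih =>
    intro hn j
    have h1 : 1 ≤ n + 1 := by omega
    have herror : c (n + 1) j - ζ (n + 1) j =
        subdivision α (c n - ζ n) j + (d (n + 1) j - q (n + 1) j) := by
      rw [hc _ h1 hn, hζ _ h1 hn, Nat.add_sub_cancel, subdivision_sub hα, Pi.sub_apply]
      ring
    rw [herror, sum_Icc_pow_mul_succ, hq]
    exact (abs_add_le _ _).trans <| add_le_add
      (abs_subdivision_le hα (ih (by omega)) j) (abs_sub_ite_odd_le (hd _ h1 hn) j)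

theorem synthesis_reconstruction_error_general (α γ : ℤ → ℝ)
    (hα : (Function.support α).Finite)
    (hγ : Summable fun k : ℤ => |γ k|)
    (J : ℕ) (cJ : ℤ → ℝ)
    (hc : BddAbove (Set.range fun j : ℤ => |cJ j|))
    (cseq : ℕ → ℤ → ℝ) (hcseq : ∀ ℓ : ℕ, cseq ℓ = (decimation γ)^[J - ℓ] cJ)
    (d : ℕ → ℤ → ℝ)
    (hd : ∀ ℓ : ℕ, 1 ≤ ℓ → ℓ ≤ J → ∀ j : ℤ,
      d ℓ j = cseq ℓ j - subdivision α (cseq (ℓ - 1)) j)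
    (q : ℕ → ℤ → ℝ)
    (hq : ∀ ℓ : ℕ, ∀ j : ℤ, q ℓ j = if Odd j then d ℓ j else 0)
    (ζ : ℕ → ℤ → ℝ) (hζ0 : ζ 0 = cseq 0)
    (hζ : ∀ ℓ : ℕ, 1 ≤ ℓ → ℓ ≤ J → ∀ j : ℤ,
      ζ ℓ j = subdivision α (ζ (ℓ - 1)) j + q ℓ j) :
    ∀ j : ℤ, |cJ j - ζ J j| ≤
      ∑ ℓ ∈ Finset.Icc 1 J,
        (max (∑' k : ℤ, |α (2 * k)|) (∑' k : ℤ, |α (2 * k + 1)|)) ^ (J - ℓ) *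
          (⨆ i : ℤ, |d ℓ (2 * i)|) := by
  obtain ⟨M, hM⟩ := hc
  have hcseq_le (ℓ : ℕ) (k : ℤ) : |cseq ℓ k| ≤ (∑' k, |γ k|) ^ (J - ℓ) * M := by
    rw [hcseq]
    exact abs_iterate_decimation_le hγ (fun k => hM ⟨k, rfl⟩) _ k
  have hd_bdd (ℓ : ℕ) (h1 : 1 ≤ ℓ) (hJ : ℓ ≤ J) :
      BddAbove (Set.range fun i => |d ℓ (2 * i)|) := by
    exact ⟨_, Set.forall_mem_range.2 fun i => by
      rw [hd ℓ h1 hJ]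
      exact (abs_sub _ _).trans
        (add_le_add (hcseq_le ℓ _) (abs_subdivision_le hα (hcseq_le (ℓ - 1)) _))⟩
  have hanalysis (ℓ : ℕ) (h1 : 1 ≤ ℓ) (hJ : ℓ ≤ J) (j : ℤ) :
      cseq ℓ j = subdivision α (cseq (ℓ - 1)) j + d ℓ j := by
    rw [hd ℓ h1 hJ]
    ring
  intro j
  have := abs_sub_synthesis_le hα hanalysis hζ0 hζ hq hd_bdd J le_rfl j
  rwa [hcseq J, Nat.sub_self, Function.iterate_zero_apply] at this

/-- Reconstruction error after discarding the even-indexed detail coefficients: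
analyzing `c^{(J)}` by `c^{(ℓ-1)} = D_γ c^{(ℓ)}`, `d^{(ℓ)} = c^{(ℓ)} - S_α c^{(ℓ-1)}`,
keeping only odd details `q^{(ℓ)}` and synthesizing
`ζ^{(0)} = c^{(0)}`, `ζ^{(ℓ)} = S_α ζ^{(ℓ-1)} + q^{(ℓ)}`, one has
`‖c^{(J)} - ζ^{(J)}‖_∞ ≤ ∑_{ℓ=1}^J ‖S_α‖^{J-ℓ} ‖d^{(ℓ)}↓2‖_∞`, with
`‖S_α‖ = max{∑_k |α_{2k}|, ∑_k |α_{2k+1}|}`. -/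
theorem synthesis_reconstruction_error (α γ : ℤ → ℝ)
    (hα : (Function.support α).Finite)
    (hγ : Summable fun k : ℤ => |γ k|)
    (J : ℕ) (hJ : 1 ≤ J) (cJ : ℤ → ℝ)
    (hc : BddAbove (Set.range fun j : ℤ => |cJ j|))
    (cseq : ℕ → ℤ → ℝ) (hcseq : ∀ ℓ : ℕ, cseq ℓ = (decimation γ)^[J - ℓ] cJ)
    (d : ℕ → ℤ → ℝ)
    (hd : ∀ ℓ : ℕ, 1 ≤ ℓ → ℓ ≤ J → ∀ j : ℤ,
      d ℓ j = cseq ℓ j - subdivision α (cseq (ℓ - 1)) j)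
    (q : ℕ → ℤ → ℝ)
    (hq : ∀ ℓ : ℕ, ∀ j : ℤ, q ℓ j = if Odd j then d ℓ j else 0)
    (ζ : ℕ → ℤ → ℝ) (hζ0 : ζ 0 = cseq 0)
    (hζ : ∀ ℓ : ℕ, 1 ≤ ℓ → ℓ ≤ J → ∀ j : ℤ,
      ζ ℓ j = subdivision α (ζ (ℓ - 1)) j + q ℓ j) :
    ∀ j : ℤ, |cJ j - ζ J j| ≤
      ∑ ℓ ∈ Finset.Icc 1 J,
        (max (∑' k : ℤ, |α (2 * k)|) (∑' k : ℤ, |α (2 * k + 1)|)) ^ (J - ℓ) *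
          (⨆ i : ℤ, |d ℓ (2 * i)|) :=
  synthesis_reconstruction_error_general α γ hα hγ J cJ hc cseq hcseq d hd q hq ζ hζ0 hζ
end
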